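/- arXiv:1706.01168 — 9 statements merged into one kernel-verified Lean document; each statement's English description precedes it below -/
import Mathlib

section
/- Let $(\Omega,\mathcal A)$ be a measurable space, $Q_1,\dots,Q_n$ probability measures on it, $F_1,\dots,F_n$ Borel probability measures on $\mathbb{R}$, and $X:\Omega\to\mathbb{R}$ measurable. Then $X$ has distribution $F_i$ under $Q_i$ for every $i=1,\dots,n$ if and only if for every probability measure $Q$ on $(\Omega,\mathcal A)$ dominating each $Q_i$, the pushforward $F=Q\circ X^{-1}$ dominates each $F_i$ and $(\frac{dF_1}{dF},\dots,\frac{dF_n}{dF})(X) = \mathbb{E}^Q[(\frac{dQ_1}{dQ},\dots,\frac{dQ_n}{dQ})\mid X]$ holds $Q$-almost surely. -/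
/-!
For a dominating probability measure `Q'`, the function `(dFᵢ/dF)(X)` is `σ(X)`-measurable and
its integral over `X⁻¹' A` is `Fᵢ A`, while the integral of `dQᵢ/dQ'` over the same set is
`Qᵢ (X⁻¹' A)`. Since the sets `X⁻¹' A` are exactly the `σ(X)`-measurable sets, the
conditional-expectation identity at `Q'` says precisely that `Qᵢ ∘ X⁻¹ = Fᵢ`. For the converse it
therefore suffices to use one dominating probability measure, e.g. the average of the `Qᵢ`.
-/

open MeasureTheory
open scoped ENNReal

namespace MeasureTheory

lemma Measure.exists_isProbabilityMeasure_absolutelyContinuous {α ι : Type*} [MeasurableSpace α]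
    [Fintype ι] [Nonempty ι] (μ : ι → Measure α) [∀ i, IsProbabilityMeasure (μ i)] :
    ∃ ν : Measure α, IsProbabilityMeasure ν ∧ ∀ i, μ i ≪ ν := by
  refine ⟨(Fintype.card ι : ℝ≥0∞)⁻¹ • Measure.sum μ, ⟨?_⟩, fun i => ?_⟩
  · simp [ENNReal.inv_mul_cancel]
  · exact (Measure.absolutelyContinuous_sum_right i .rfl).smul_right (by simp)

lemma Measure.ext_iff_measureReal {α : Type*} [MeasurableSpace α] {μ ν : Measure α}
    [IsFiniteMeasure μ] [IsFiniteMeasure ν] :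
    μ = ν ↔ ∀ s, MeasurableSet s → μ.real s = ν.real s := by
  refine Measure.ext_iff.trans (forall₂_congr fun s _ => ?_)
  exact (measureReal_eq_measureReal_iff (measure_ne_top _ _) (measure_ne_top _ _)).symm

section ConditionalExpectation

variable {α E : Type*} {m m₀ : MeasurableSpace α} {μ : Measure[m₀] α}
  [NormedAddCommGroup E] [NormedSpace ℝ E] [CompleteSpace E]

theorem ae_eq_condExp_iff_forall_setIntegral_eq (hm : m ≤ m₀) [SigmaFinite (μ.trim hm)]
    {f g : α → E} (hf : Integrable f μ) (hg : Integrable g μ) (hgm : AEStronglyMeasurable[m] g μ) :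
    g =ᵐ[μ] μ[f | m] ↔ ∀ s, MeasurableSet[m] s → ∫ x in s, g x ∂μ = ∫ x in s, f x ∂μ := by
  refine ⟨fun h s hs => ?_, fun h =>
    ae_eq_condExp_of_forall_setIntegral_eq hm hf (fun _ _ _ => hg.integrableOn)
      (fun s hs _ => h s hs) hgm⟩
  rw [integral_congr_ae (ae_restrict_of_ae h), setIntegral_condExp hm hf hs]

end ConditionalExpectation

section Pushforward

variable {Ω β : Type*} [MeasurableSpace Ω] [MeasurableSpace β] {X : Ω → β} {ν : Measure Ω}
  [IsFiniteMeasure ν]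

lemma setIntegral_preimage_toReal_rnDeriv_map (hX : Measurable X) {G : Measure β}
    [IsFiniteMeasure G] (hG : G ≪ ν.map X) {s : Set β} (hs : MeasurableSet s) :
    ∫ ω in X ⁻¹' s, (G.rnDeriv (ν.map X) (X ω)).toReal ∂ν = G.real s := by
  rw [← setIntegral_map hs (Measure.measurable_rnDeriv _ _).ennreal_toReal.aestronglyMeasurable
    hX.aemeasurable, Measure.setIntegral_toReal_rnDeriv hG]

theorem comp_rnDeriv_map_ae_eq_condExp_iff {ι : Type*} [Fintype ι] (hX : Measurable X)
    {μ : ι → Measure Ω} [∀ i, IsFiniteMeasure (μ i)] (hμ : ∀ i, μ i ≪ ν)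
    {G : ι → Measure β} [∀ i, IsFiniteMeasure (G i)] (hG : ∀ i, G i ≪ ν.map X) :
    (fun ω i => ((G i).rnDeriv (ν.map X) (X ω)).toReal)
        =ᵐ[ν] ν[fun ω i => ((μ i).rnDeriv ν ω).toReal | MeasurableSpace.comap X ‹_›] ↔
      ∀ i, (μ i).map X = G i := by
  have hf : Integrable (fun ω i => ((μ i).rnDeriv ν ω).toReal) ν :=
    .of_eval fun i => Measure.integrable_toReal_rnDeriv
  have hg : Integrable (fun ω i => ((G i).rnDeriv (ν.map X) (X ω)).toReal) ν :=
    .of_eval fun i => Measure.integrable_toReal_rnDeriv.comp_measurable hX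
  have hgm : Measurable[MeasurableSpace.comap X ‹_›]
      (fun ω i => ((G i).rnDeriv (ν.map X) (X ω)).toReal) :=
    (measurable_pi_lambda _ fun i => (Measure.measurable_rnDeriv _ _).ennreal_toReal).comp
      (comap_measurable X)
  rw [ae_eq_condExp_iff_forall_setIntegral_eq hX.comap_le hf hg
    hgm.stronglyMeasurable.aestronglyMeasurable]
  have hpreimage : ∀ t, MeasurableSet t →
      ((∫ ω in X ⁻¹' t, fun i => ((G i).rnDeriv (ν.map X) (X ω)).toReal ∂ν) =
          ∫ ω in X ⁻¹' t, fun i => ((μ i).rnDeriv ν ω).toReal ∂ν ↔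
        ∀ i, (G i).real t = ((μ i).map X).real t) := by
    intro t ht
    refine funext_iff.trans (forall_congr' fun i => ?_)
    rw [eval_integral (fun j => (hg.eval j).integrableOn),
      eval_integral (fun j => (hf.eval j).integrableOn),
      setIntegral_preimage_toReal_rnDeriv_map hX (hG i) ht,
      Measure.setIntegral_toReal_rnDeriv (hμ i), map_measureReal_apply hX ht]
  refine ⟨fun h i => ?_, fun h _ ⟨t, ht, hs⟩ => hs ▸ (hpreimage t ht).2 fun i => by rw [h i]⟩
  exact Measure.ext_iff_measureReal.2 fun t ht => ((hpreimage t ht).1 (h _ ⟨t, ht, rfl⟩) i).symm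

end Pushforward

end MeasureTheory

/-- Theorem 2.2, equivalence (i) ⇔ (ii).
`X` has distribution `F i` under `Q i` for every `i` iff for every probability measure `Q'`
dominating each `Q i`, the pushforward `F = Q' ∘ X⁻¹` dominates each `F i` and the vector of
Radon–Nikodym derivatives `(dFᵢ/dF)(X)` coincides `Q'`-a.s. with the conditional expectation
of `(dQᵢ/dQ')` given `σ(X)`. -/
theorem compatibility_characterization
    {Ω : Type} [MeasurableSpace Ω] (n : ℕ)
    (Q : Fin n → Measure Ω) (F : Fin n → Measure ℝ)
    [∀ i, IsProbabilityMeasure (Q i)] [∀ i, IsProbabilityMeasure (F i)]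
    (X : Ω → ℝ) (hX : Measurable X) :
    (∀ i, (Q i).map X = F i) ↔
      (∀ Q' : Measure Ω, IsProbabilityMeasure Q' → (∀ i, Q i ≪ Q') →
        (∀ i, F i ≪ Q'.map X) ∧
        (fun ω => fun i => ((F i).rnDeriv (Q'.map X) (X ω)).toReal)
          =ᵐ[Q']
        Q'[fun ω => fun i => ((Q i).rnDeriv Q' ω).toReal
            | MeasurableSpace.comap X inferInstance]) := by
  refine ⟨fun hmap Q' _ hQ => ?_, fun h i => ?_⟩
  · have hF : ∀ i, F i ≪ Q'.map X := fun i => hmap i ▸ (hQ i).map hX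
    exact ⟨hF, (comp_rnDeriv_map_ae_eq_condExp_iff hX hQ hF).2 hmap⟩
  · have : Nonempty (Fin n) := ⟨i⟩
    obtain ⟨Q', _, hQ⟩ := Measure.exists_isProbabilityMeasure_absolutelyContinuous Q
    obtain ⟨hF, hae⟩ := h Q' ‹_› hQ
    exact (comp_rnDeriv_map_ae_eq_condExp_iff hX hQ hF).1 hae i
end

section
/- Let $Q_1\ll Q_2$ be probability measures on $(\Omega,\mathcal A)$ and $F_1,F_2$ Borel probability measures on $\mathbb{R}$. Then there exists a measurable $X:\Omega\to\mathbb{R}$ with $Q_i\circ X^{-1}=F_i$ for $i=1,2$ if and only if there exists a measurable $X$ with $Q_2\circ X^{-1}=F_2$, $F_1\ll F_2$, and $\frac{dF_1}{dF_2}(X)=\mathbb{E}^{Q_2}[\frac{dQ_1}{dQ_2}\mid X]$ $Q_2$-almost surely. -/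
/-!
The pullback along `X` of the density of `Q₁ ∘ X⁻¹` with respect to `Q₂ ∘ X⁻¹` is the conditional
expectation of `dQ₁/dQ₂` given `σ(X)` (`MeasureTheory.toReal_rnDeriv_map`), which is the forward
direction. Conversely, if `dF₁/dF₂ ∘ X` is that conditional expectation too, then `dF₁/dF₂` and
`d(Q₁ ∘ X⁻¹)/dF₂` agree `F₂`-a.e., and a measure is determined by its density.
-/

namespace MeasureTheory

variable {𝓧 𝓨 : Type*} {m𝓧 : MeasurableSpace 𝓧} {m𝓨 : MeasurableSpace 𝓨}

lemma Measure.eq_of_toReal_rnDeriv_ae_eq {ρ ρ' ν : Measure 𝓨} [SigmaFinite ρ] [SigmaFinite ρ']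
    [SigmaFinite ν] (hρ : ρ ≪ ν) (hρ' : ρ' ≪ ν)
    (h : (fun y ↦ (ρ.rnDeriv ν y).toReal) =ᵐ[ν] fun y ↦ (ρ'.rnDeriv ν y).toReal) :
    ρ = ρ' := by
  have h_rnDeriv : ρ.rnDeriv ν =ᵐ[ν] ρ'.rnDeriv ν := by
    filter_upwards [h, Measure.rnDeriv_ne_top ρ ν, Measure.rnDeriv_ne_top ρ' ν]
      with y hy hρ_ne_top hρ'_ne_top
    exact (ENNReal.toReal_eq_toReal_iff' hρ_ne_top hρ'_ne_top).mp hy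
  rw [← Measure.withDensity_rnDeriv_eq ρ ν hρ, ← Measure.withDensity_rnDeriv_eq ρ' ν hρ',
    withDensity_congr_ae h_rnDeriv]

lemma map_eq_of_toReal_rnDeriv_comp_ae_eq_condExp {μ ν : Measure 𝓧} [IsFiniteMeasure μ]
    (hμν : μ ≪ ν) {g : 𝓧 → 𝓨} (hg : Measurable g) [SigmaFinite (ν.map g)]
    {ρ : Measure 𝓨} [SigmaFinite ρ] (hρ : ρ ≪ ν.map g)
    (h : (fun a ↦ (ρ.rnDeriv (ν.map g) (g a)).toReal) =ᵐ[ν]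
      ν[(fun a ↦ (μ.rnDeriv ν a).toReal) | m𝓨.comap g]) :
    μ.map g = ρ := by
  refine Measure.eq_of_toReal_rnDeriv_ae_eq (hμν.map hg) hρ ?_
  refine (ae_map_iff hg.aemeasurable (measurableSet_eq_fun (by fun_prop) (by fun_prop))).mpr ?_
  exact (toReal_rnDeriv_map hμν hg).trans h.symm

end MeasureTheory

open MeasureTheory

theorem compatibility_two_measures_general
    {Ω : Type} [MeasurableSpace Ω]
    (Q₁ Q₂ : Measure Ω) [IsProbabilityMeasure Q₁] [IsProbabilityMeasure Q₂]
    (h12 : Q₁ ≪ Q₂)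
    (F₁ F₂ : Measure ℝ) [IsProbabilityMeasure F₁] :
    (∃ X : Ω → ℝ, Measurable X ∧ Q₁.map X = F₁ ∧ Q₂.map X = F₂) ↔
      (∃ X : Ω → ℝ, Measurable X ∧ Q₂.map X = F₂ ∧ F₁ ≪ F₂ ∧
        (fun ω => (F₁.rnDeriv F₂ (X ω)).toReal)
          =ᵐ[Q₂]
        Q₂[fun ω => (Q₁.rnDeriv Q₂ ω).toReal
            | MeasurableSpace.comap X inferInstance]) := by
  constructor
  · rintro ⟨X, hX, rfl, rfl⟩
    exact ⟨X, hX, rfl, h12.map hX, toReal_rnDeriv_map h12 hX⟩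
  · rintro ⟨X, hX, rfl, hF, h_condExp⟩
    exact ⟨X, hX, map_eq_of_toReal_rnDeriv_comp_ae_eq_condExp h12 hX hF h_condExp, rfl⟩

/-- Corollary 2.3. For probability measures `Q₁ ≪ Q₂` on `(Ω, 𝒜)` and Borel
probability measures `F₁, F₂` on `ℝ`, `(Q₁,Q₂)` and `(F₁,F₂)` are compatible iff there exists a
random variable `X` with distribution `F₂` under `Q₂` such that `F₁ ≪ F₂` and
`(dF₁/dF₂)(X) = E^{Q₂}[dQ₁/dQ₂ | σ(X)]` `Q₂`-a.s. -/
theorem compatibility_two_measures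
    {Ω : Type} [MeasurableSpace Ω]
    (Q₁ Q₂ : Measure Ω) [IsProbabilityMeasure Q₁] [IsProbabilityMeasure Q₂]
    (h12 : Q₁ ≪ Q₂)
    (F₁ F₂ : Measure ℝ) [IsProbabilityMeasure F₁] [IsProbabilityMeasure F₂] :
    (∃ X : Ω → ℝ, Measurable X ∧ Q₁.map X = F₁ ∧ Q₂.map X = F₂) ↔
      (∃ X : Ω → ℝ, Measurable X ∧ Q₂.map X = F₂ ∧ F₁ ≪ F₂ ∧
        (fun ω => (F₁.rnDeriv F₂ (X ω)).toReal)
          =ᵐ[Q₂]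
        Q₂[fun ω => (Q₁.rnDeriv Q₂ ω).toReal
            | MeasurableSpace.comap X inferInstance]) :=
  compatibility_two_measures_general Q₁ Q₂ h12 F₁ F₂
end

section
/- Suppose $(Q_1,\dots,Q_n)$ and $(F_1,\dots,F_n)$ are compatible, i.e., there exists a measurable $X:\Omega\to\mathbb{R}$ with $Q_i\circ X^{-1}=F_i$ for all $i$. Then for every probability measure $Q$ dominating $(Q_1,\dots,Q_n)$ there exists a Borel probability measure $F$ on $\mathbb{R}$ dominating $(F_1,\dots,F_n)$ such that for every convex function $f:\mathbb{R}^n\to\mathbb{R}$, $\int_{\mathbb{R}} f(\frac{dF_1}{dF},\dots,\frac{dF_n}{dF})\,dF \le \int_{\Omega} f(\frac{dQ_1}{dQ},\dots,\frac{dQ_n}{dQ})\,dQ$ (whenever both integrals are defined). -/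
/-!
Take `F' = Q' ∘ X⁻¹`. Then `F i ≪ F'`, and composed with `X` the density `dFᵢ/dF'` is the
conditional expectation of `dQᵢ/dQ'` given `σ(X)`. The inequality is therefore conditional Jensen
for the vector of densities, integrated against `Q'`.
-/

open MeasureTheory

section CondExpPi

variable {α ι E : Type*} {m m₀ : MeasurableSpace α} {μ : Measure α} [Fintype ι]
  [NormedAddCommGroup E] [NormedSpace ℝ E] [CompleteSpace E]

theorem condExp_pi_ae_eq {f : α → ι → E} (hf : Integrable f μ) :
    μ[f | m] =ᵐ[μ] fun a i => μ[fun a => f a i | m] a := by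
  have hcoord (i : ι) :=
    (ContinuousLinearMap.proj (R := ℝ) (φ := fun _ : ι => E) i).comp_condExp_comm (m := m) hf
  filter_upwards [ae_all_iff.2 hcoord] with a ha
  exact funext ha

end CondExpPi

section RnDerivMap

variable {α β ι : Type*} {mα : MeasurableSpace α} {mβ : MeasurableSpace β} [Fintype ι]
  {μ : ι → Measure α} {ν : Measure α} [∀ i, IsFiniteMeasure (μ i)]

theorem integrable_toReal_rnDeriv_pi :
    Integrable (fun a i => ((μ i).rnDeriv ν a).toReal) ν :=
  integrable_pi_iff.2 fun _ => Measure.integrable_toReal_rnDeriv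

theorem toReal_rnDeriv_map_pi (hμν : ∀ i, μ i ≪ ν) {g : α → β} (hg : Measurable g)
    [SigmaFinite (ν.map g)] :
    (fun a i => (((μ i).map g).rnDeriv (ν.map g) (g a)).toReal) =ᵐ[ν]
      ν[fun a i => ((μ i).rnDeriv ν a).toReal | mβ.comap g] := by
  filter_upwards [ae_all_iff.2 fun i => toReal_rnDeriv_map (hμν i) hg,
    condExp_pi_ae_eq (m := mβ.comap g) (integrable_toReal_rnDeriv_pi (μ := μ) (ν := ν))]
    with a hmap hpi
  rw [hpi]
  exact funext hmap

theorem integral_convexOn_toReal_rnDeriv_map_le [IsFiniteMeasure ν] (hμν : ∀ i, μ i ≪ ν)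
    {g : α → β} (hg : Measurable g) {φ : (ι → ℝ) → ℝ} (hφ : ConvexOn ℝ Set.univ φ)
    (hφ_lsc : LowerSemicontinuous φ)
    (h_int_map : Integrable
      (fun b => φ fun i => (((μ i).map g).rnDeriv (ν.map g) b).toReal) (ν.map g))
    (h_int : Integrable (fun a => φ fun i => ((μ i).rnDeriv ν a).toReal) ν) :
    ∫ b, φ (fun i => (((μ i).map g).rnDeriv (ν.map g) b).toReal) ∂(ν.map g) ≤
      ∫ a, φ (fun i => ((μ i).rnDeriv ν a).toReal) ∂ν := by
  set V : α → ι → ℝ := fun a i => ((μ i).rnDeriv ν a).toReal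
  have hcond := toReal_rnDeriv_map_pi hμν hg
  have h_int_cond : Integrable (φ ∘ ν[V | mβ.comap g]) ν :=
    ((integrable_map_measure h_int_map.aestronglyMeasurable hg.aemeasurable).1 h_int_map).congr
      (hcond.fun_comp φ)
  calc ∫ b, φ (fun i => (((μ i).map g).rnDeriv (ν.map g) b).toReal) ∂(ν.map g)
      = ∫ a, φ (ν[V | mβ.comap g] a) ∂ν :=
        (integral_map hg.aemeasurable h_int_map.aestronglyMeasurable).trans
          (integral_congr_ae (hcond.fun_comp φ))
    _ ≤ ∫ a, ν[φ ∘ V | mβ.comap g] a ∂ν :=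
        integral_mono_ae h_int_cond integrable_condExp
          (hφ.map_condExp_le_univ hg.comap_le hφ_lsc integrable_toReal_rnDeriv_pi h_int)
    _ = ∫ a, φ (V a) ∂ν := integral_condExp hg.comap_le

end RnDerivMap

theorem compatible_implies_convex_order_general
    {Ω : Type} [MeasurableSpace Ω] (n : ℕ)
    (Q : Fin n → Measure Ω) (F : Fin n → Measure ℝ)
    [∀ i, IsProbabilityMeasure (Q i)]
    (hcomp : ∃ X : Ω → ℝ, Measurable X ∧ ∀ i, (Q i).map X = F i) :
    ∀ Q' : Measure Ω, IsProbabilityMeasure Q' → (∀ i, Q i ≪ Q') →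
      ∃ F' : Measure ℝ, IsProbabilityMeasure F' ∧ (∀ i, F i ≪ F') ∧
        ∀ f : (Fin n → ℝ) → ℝ, ConvexOn ℝ Set.univ f →
          Integrable (fun x => f (fun i => ((F i).rnDeriv F' x).toReal)) F' →
          Integrable (fun ω => f (fun i => ((Q i).rnDeriv Q' ω).toReal)) Q' →
          ∫ x, f (fun i => ((F i).rnDeriv F' x).toReal) ∂F' ≤
            ∫ ω, f (fun i => ((Q i).rnDeriv Q' ω).toReal) ∂Q' := by
  obtain ⟨X, hX, hQF⟩ := hcomp
  obtain rfl : F = fun i => (Q i).map X := funext fun i => (hQF i).symm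
  intro Q' _ hQQ'
  refine ⟨Q'.map X, Measure.isProbabilityMeasure_map hX.aemeasurable, fun i => (hQQ' i).map hX,
    fun f hf hF_int hQ_int => ?_⟩
  have hf_cont : Continuous f := continuousOn_univ.1 (hf.continuousOn isOpen_univ)
  exact integral_convexOn_toReal_rnDeriv_map_le hQQ' hX hf hf_cont.lowerSemicontinuous
    hF_int hQ_int

/-- Lemma 3.3. If `(Q₁,…,Qₙ)` and `(F₁,…,Fₙ)` are compatible, then for every
probability measure `Q'` dominating each `Q i` there is a Borel probability measure `F'` on `ℝ`
dominating each `F i` such that for every convex `f : ℝⁿ → ℝ` (whenever both integrals are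
defined), `∫ f(dF₁/dF', …, dFₙ/dF') dF' ≤ ∫ f(dQ₁/dQ', …, dQₙ/dQ') dQ'`. -/
theorem compatible_implies_convex_order
    {Ω : Type} [MeasurableSpace Ω] (n : ℕ)
    (Q : Fin n → Measure Ω) (F : Fin n → Measure ℝ)
    [∀ i, IsProbabilityMeasure (Q i)] [∀ i, IsProbabilityMeasure (F i)]
    (hcomp : ∃ X : Ω → ℝ, Measurable X ∧ ∀ i, (Q i).map X = F i) :
    ∀ Q' : Measure Ω, IsProbabilityMeasure Q' → (∀ i, Q i ≪ Q') →
      ∃ F' : Measure ℝ, IsProbabilityMeasure F' ∧ (∀ i, F i ≪ F') ∧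
        ∀ f : (Fin n → ℝ) → ℝ, ConvexOn ℝ Set.univ f →
          Integrable (fun x => f (fun i => ((F i).rnDeriv F' x).toReal)) F' →
          Integrable (fun ω => f (fun i => ((Q i).rnDeriv Q' ω).toReal)) Q' →
          ∫ x, f (fun i => ((F i).rnDeriv F' x).toReal) ∂F' ≤
            ∫ ω, f (fun i => ((Q i).rnDeriv Q' ω).toReal) ∂Q' :=
  compatible_implies_convex_order_general n Q F hcomp
end

section
/- Let $P_1,\dots,P_n$ and $Q_1,\dots,Q_n$ be probability measures on measurable spaces $(\Omega_1,\mathcal A_1)$ and $(\Omega_2,\mathcal A_2)$ respectively. If there exist reference probability measures $P$ dominating $(P_1,\dots,P_n)$ and $Q$ dominating $(Q_1,\dots,Q_n)$ such that $(\frac{dP_1}{dP},\dots,\frac{dP_n}{dP})$ under $P$ is dominated in convex order by $(\frac{dQ_1}{dQ},\dots,\frac{dQ_n}{dQ})$ under $Q$, then the same convex order relation holds with $P=\frac1n\sum_{i=1}^n P_i$ and $Q=\frac1n\sum_{i=1}^n Q_i$. -/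
/-!
Fix a convex `f` and `ε > 0`. Under the uniform mixture `P̄ = (1/n) ∑ Pᵢ` the density vector
`(dPᵢ/dP̄)ᵢ` lies in the compact simplex `{z ≥ 0, ∑ zᵢ = n}`, where `f` is approximated within `ε`
from below by a maximum of finitely many affine functions. Homogenizing them with the linear form
`z ↦ (∑ zᵢ)/n`, which equals `1` on the simplex, gives a convex, positively homogeneous `G`.
For such `G` the integral `∫ G(dPᵢ/dμ) dμ` does not depend on the dominating reference measure `μ`,
because `dPᵢ/dν = (dPᵢ/dμ) (dμ/dν)`. So the hypothesis applied to `G` with the references `P'`, `Q'`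
transfers to the mixtures, and `ε → 0` gives the claim for `f`.
-/

open MeasureTheory Set
open scoped ENNReal

theorem ConvexOn.finset_sup' {𝕜 E β ι : Type*} [Semiring 𝕜] [PartialOrder 𝕜] [AddCommMonoid E]
    [LinearOrder β] [AddCommMonoid β] [IsOrderedAddMonoid β] [SMul 𝕜 E] [Module 𝕜 β]
    [PosSMulStrictMono 𝕜 β] {s : Set E} {t : Finset ι} (ht : t.Nonempty) {f : ι → E → β}
    (hf : ∀ i ∈ t, ConvexOn 𝕜 s (f i)) :
    ConvexOn 𝕜 s (fun x => t.sup' ht (fun i => f i x)) := by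
  induction ht using Finset.Nonempty.cons_induction with
  | singleton i => simpa using hf i (by simp)
  | cons i t hi ht ih =>
    simp only [Finset.sup'_cons ht]
    exact (hf i (by simp)).sup (ih fun j hj => hf j (Finset.mem_cons_of_mem hj))

theorem Finset.sup'_apply_smul {F : Type*} [NormedAddCommGroup F] [NormedSpace ℝ F]
    {t : Finset (F →L[ℝ] ℝ)} (ht : t.Nonempty) {s : ℝ} (hs : 0 ≤ s) (w : F) :
    t.sup' ht (fun L => L (s • w)) = s * t.sup' ht (fun L => L w) := by
  simp only [map_smul, smul_eq_mul, Finset.mul₀_sup' hs]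

theorem ConvexOn.exists_finset_sup'_affine_approx {E : Type*} [NormedAddCommGroup E]
    [NormedSpace ℝ E] {f : E → ℝ} (hf : ConvexOn ℝ univ f) (hfc : Continuous f) {K : Set E}
    (hK : IsCompact K) {ε : ℝ} (hε : 0 < ε) :
    ∃ (t : Finset (E × ℝ →L[ℝ] ℝ)) (ht : t.Nonempty),
      (∀ z, t.sup' ht (fun L => L (z, 1)) ≤ f z) ∧
        ∀ z ∈ K, f z - ε ≤ t.sup' ht (fun L => L (z, 1)) := by
  have hminorant : ∀ y, ∃ L : E × ℝ →L[ℝ] ℝ, (∀ z, L (z, 1) ≤ f z) ∧ L (y, 1) = f y - ε / 2 := by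
    intro y
    obtain ⟨l, c, hle, heq⟩ := hf.exists_affine_le_of_lt (𝕜 := ℝ) (mem_univ y)
      (by linarith : f y - ε / 2 < f y) isClosed_univ
      (hfc.lowerSemicontinuous.lowerSemicontinuousOn _)
    exact ⟨l.coprod (c • .id ℝ ℝ), fun z => by simpa using hle ⟨z, trivial⟩, by simpa using heq⟩
  choose L hLf hLy using hminorant
  obtain ⟨s, hs⟩ := hK.elim_finite_subcover (fun y => {z | f z - ε < L y (z, 1)})
    (fun y => isOpen_lt (by fun_prop) (by fun_prop))
    (fun y _ => mem_iUnion.2 ⟨y, by simp only [mem_ofPred_eq, hLy]; linarith⟩)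
  classical
  refine ⟨(insert 0 s).image L, by simp, fun z => Finset.sup'_le _ _ ?_, fun z hz => ?_⟩
  · simpa using ⟨hLf 0 z, fun y _ => hLf y z⟩
  · obtain ⟨y, hy, hzy⟩ := mem_iUnion₂.1 (hs hz)
    exact hzy.le.trans (Finset.le_sup' (fun L => L (z, 1))
      (Finset.mem_image_of_mem L (Finset.mem_insert_of_mem hy)))

theorem ConvexOn.exists_homogeneous_approx {E : Type*} [NormedAddCommGroup E] [NormedSpace ℝ E]
    {f : E → ℝ} (hf : ConvexOn ℝ univ f) (hfc : Continuous f) (ℓ : E →L[ℝ] ℝ) {K : Set E}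
    (hK : IsCompact K) (hℓK : ∀ z ∈ K, ℓ z = 1) {ε : ℝ} (hε : 0 < ε) :
    ∃ G : E → ℝ, ConvexOn ℝ univ G ∧ Continuous G ∧
      (∀ s : ℝ, 0 ≤ s → ∀ z, G (s • z) = s * G z) ∧ ∀ z ∈ K, G z ≤ f z ∧ f z - ε ≤ G z := by
  obtain ⟨t, ht, hle, hge⟩ := hf.exists_finset_sup'_affine_approx hfc hK hε
  -- each affine minorant `z ↦ L (z, 1)` becomes the linear map `z ↦ L (z, ℓ z)`
  let A : E →L[ℝ] E × ℝ := (ContinuousLinearMap.id ℝ E).prod ℓ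
  refine ⟨fun z => t.sup' ht (fun L => L (A z)), ?_, ?_, fun s hs z => ?_, fun z hz => ?_⟩
  · exact ConvexOn.finset_sup' ht fun L _ => (L.comp A).toLinearMap.convexOn convex_univ
  · exact Continuous.finset_sup'_apply ht fun L _ => (L.comp A).continuous
  · simp only [A.map_smul]
    exact Finset.sup'_apply_smul ht hs (A z)
  · have hAz : A z = (z, 1) := by simp [A, hℓK z hz]
    simp only [hAz]
    exact ⟨hle z, hge z hz⟩

theorem isCompact_setOf_nonneg_sum_eq {ι : Type*} [Fintype ι] (c : ℝ) :
    IsCompact {z : ι → ℝ | (∀ i, 0 ≤ z i) ∧ ∑ i, z i = c} := by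
  refine (isCompact_Icc (a := 0) (b := fun _ => c)).of_isClosed_subset ?_ ?_
  · simp only [ofPred_and, ofPred_forall]
    exact (isClosed_iInter fun i => isClosed_le (by fun_prop) (by fun_prop)).inter
      (isClosed_eq (by fun_prop) (by fun_prop))
  · rintro z ⟨hz, rfl⟩
    exact ⟨hz, fun i => Finset.single_le_sum (fun j _ => hz j) (Finset.mem_univ i)⟩

namespace MeasureTheory

variable {Ω ι : Type*} [MeasurableSpace Ω]

theorem Measure.rnDeriv_finset_sum (s : Finset ι) (P : ι → Measure Ω)
    [∀ i, IsFiniteMeasure (P i)] (μ : Measure Ω) [SigmaFinite μ] :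
    (∑ i ∈ s, P i).rnDeriv μ =ᵐ[μ] ∑ i ∈ s, (P i).rnDeriv μ := by
  classical
  induction s using Finset.induction_on with
  | empty => simp [Measure.rnDeriv_zero μ]
  | insert i s hi ih =>
    simp only [Finset.sum_insert hi]
    exact (Measure.rnDeriv_add _ _ μ).trans (Filter.EventuallyEq.rfl.add ih)

theorem integrable_comp_of_ae_mem_isCompact {E : Type*} [TopologicalSpace E] {μ : Measure Ω}
    [IsFiniteMeasure μ] {v : Ω → E} (hv : AEStronglyMeasurable v μ) {K : Set E}
    (hK : IsCompact K) (hvK : ∀ᵐ x ∂μ, v x ∈ K) {g : E → ℝ} (hg : Continuous g) :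
    Integrable (fun x => g (v x)) μ := by
  obtain ⟨C, hC⟩ := hK.exists_bound_of_continuousOn hg.continuousOn
  exact .of_bound (hg.comp_aestronglyMeasurable hv) C (hvK.mono fun x hx => hC _ hx)

noncomputable def rnDerivVec (P : ι → Measure Ω) (μ : Measure Ω) (x : Ω) : ι → ℝ :=
  fun i => ((P i).rnDeriv μ x).toReal

theorem measurable_rnDerivVec (P : ι → Measure Ω) (μ : Measure Ω) :
    Measurable (rnDerivVec P μ) :=
  measurable_pi_lambda _ fun _ => (Measure.measurable_rnDeriv _ _).ennreal_toReal

section ChangeOfReference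

variable [Countable ι] {P : ι → Measure Ω} {μ ν : Measure Ω} [∀ i, SigmaFinite (P i)]
  [SigmaFinite μ] [SigmaFinite ν] {G : (ι → ℝ) → ℝ}

theorem rnDerivVec_ae_eq_smul (hPμ : ∀ i, P i ≪ μ) :
    rnDerivVec P ν =ᵐ[ν] fun x => (μ.rnDeriv ν x).toReal • rnDerivVec P μ x := by
  filter_upwards [ae_all_iff.2 fun i => Measure.rnDeriv_mul_rnDeriv (κ := ν) (hPμ i)] with x hx
  ext i
  simp [rnDerivVec, ← hx i, ENNReal.toReal_mul, mul_comm]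

theorem comp_rnDerivVec_ae_eq_mul (hPμ : ∀ i, P i ≪ μ)
    (hG : ∀ s : ℝ, 0 ≤ s → ∀ z, G (s • z) = s * G z) :
    (fun x => G (rnDerivVec P ν x)) =ᵐ[ν]
      fun x => (μ.rnDeriv ν x).toReal * G (rnDerivVec P μ x) := by
  filter_upwards [rnDerivVec_ae_eq_smul hPμ] with x hx
  rw [hx, hG _ ENNReal.toReal_nonneg]

theorem integral_comp_rnDerivVec_of_homogeneous (hPμ : ∀ i, P i ≪ μ) (hμν : μ ≪ ν)
    (hG : ∀ s : ℝ, 0 ≤ s → ∀ z, G (s • z) = s * G z) :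
    ∫ x, G (rnDerivVec P ν x) ∂ν = ∫ x, G (rnDerivVec P μ x) ∂μ := by
  rw [integral_congr_ae (comp_rnDerivVec_ae_eq_mul hPμ hG), ← integral_rnDeriv_smul hμν]
  rfl

theorem integrable_comp_rnDerivVec_iff_of_homogeneous (hPμ : ∀ i, P i ≪ μ) (hμν : μ ≪ ν)
    (hG : ∀ s : ℝ, 0 ≤ s → ∀ z, G (s • z) = s * G z) :
    Integrable (fun x => G (rnDerivVec P ν x)) ν ↔
      Integrable (fun x => G (rnDerivVec P μ x)) μ := by
  rw [integrable_congr (comp_rnDerivVec_ae_eq_mul hPμ hG), integrable_toReal_rnDeriv_mul_iff hμν]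

end ChangeOfReference

section UniformMixture

variable [Fintype ι] (P : ι → Measure Ω)

noncomputable def uniformMixture : Measure Ω := (Fintype.card ι : ℝ≥0∞)⁻¹ • ∑ i, P i

theorem card_smul_uniformMixture [Nonempty ι] :
    (Fintype.card ι : ℝ≥0∞) • uniformMixture P = ∑ i, P i := by
  rw [uniformMixture, smul_smul, ENNReal.mul_inv_cancel (by simp) (by simp), one_smul]

instance [Nonempty ι] [∀ i, IsFiniteMeasure (P i)] : IsFiniteMeasure (uniformMixture P) :=
  Measure.smul_finite _ (by simp)

instance [Nonempty ι] [∀ i, IsProbabilityMeasure (P i)] :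
    IsProbabilityMeasure (uniformMixture P) := by
  constructor
  simp [uniformMixture, Measure.finsetSum_apply, ENNReal.inv_mul_cancel]

theorem absolutelyContinuous_uniformMixture (i : ι) : P i ≪ uniformMixture P := by
  have : Nonempty ι := ⟨i⟩
  have hle : P i ≤ (Fintype.card ι : ℝ≥0∞) • uniformMixture P :=
    card_smul_uniformMixture P ▸
      Finset.single_le_sum (fun j _ => Measure.zero_le (P j)) (Finset.mem_univ i)
  exact (Measure.absolutelyContinuous_of_le hle).trans Measure.smul_absolutelyContinuous

theorem uniformMixture_absolutelyContinuous {μ : Measure Ω} (hPμ : ∀ i, P i ≪ μ) :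
    uniformMixture P ≪ μ := by
  refine Measure.smul_absolutelyContinuous.trans fun s hs => ?_
  simp [Measure.finsetSum_apply, fun i => hPμ i hs]

variable [Nonempty ι] [∀ i, IsFiniteMeasure (P i)]

theorem ae_rnDerivVec_uniformMixture_mem :
    ∀ᵐ x ∂uniformMixture P, rnDerivVec P (uniformMixture P) x ∈
      {z : ι → ℝ | (∀ i, 0 ≤ z i) ∧ ∑ i, z i = Fintype.card ι} := by
  -- `∑ᵢ dPᵢ/dP̄ = d(∑ᵢ Pᵢ)/dP̄ = d(n • P̄)/dP̄ = n`
  have hsum := Measure.rnDeriv_finset_sum Finset.univ P (uniformMixture P)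
  rw [← card_smul_uniformMixture] at hsum
  filter_upwards [hsum, Measure.rnDeriv_smul_left_of_ne_top' (uniformMixture P) (uniformMixture P)
      (ENNReal.natCast_ne_top (Fintype.card ι)), Measure.rnDeriv_self (uniformMixture P),
    ae_all_iff.2 fun i => Measure.rnDeriv_lt_top (P i) (uniformMixture P)]
    with x hx_sum hx_smul hx_self hx_fin
  refine ⟨fun i => ENNReal.toReal_nonneg, ?_⟩
  simp only [rnDerivVec]
  rw [← ENNReal.toReal_sum fun i _ => (hx_fin i).ne, ← Finset.sum_apply, ← hx_sum, hx_smul]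
  simp [hx_self]

theorem integrable_comp_rnDerivVec_uniformMixture {g : (ι → ℝ) → ℝ} (hg : Continuous g) :
    Integrable (fun x => g (rnDerivVec P (uniformMixture P) x)) (uniformMixture P) :=
  integrable_comp_of_ae_mem_isCompact (measurable_rnDerivVec _ _).aestronglyMeasurable
    (isCompact_setOf_nonneg_sum_eq _) (ae_rnDerivVec_uniformMixture_mem P) hg

theorem integral_comp_rnDerivVec_uniformMixture_mono {g h : (ι → ℝ) → ℝ} (hg : Continuous g)
    (hh : Continuous h)
    (hgh : ∀ z : ι → ℝ, (∀ i, 0 ≤ z i) → ∑ i, z i = Fintype.card ι → g z ≤ h z) :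
    ∫ x, g (rnDerivVec P (uniformMixture P) x) ∂uniformMixture P ≤
      ∫ x, h (rnDerivVec P (uniformMixture P) x) ∂uniformMixture P :=
  integral_mono_ae (integrable_comp_rnDerivVec_uniformMixture P hg)
    (integrable_comp_rnDerivVec_uniformMixture P hh)
    ((ae_rnDerivVec_uniformMixture_mem P).mono fun _ hx => hgh _ hx.1 hx.2)

end UniformMixture

theorem integral_comp_rnDerivVec_uniformMixture_le [Fintype ι] {Ω₁ Ω₂ : Type*}
    [MeasurableSpace Ω₁] [MeasurableSpace Ω₂] {P : ι → Measure Ω₁} {Q : ι → Measure Ω₂}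
    [∀ i, IsProbabilityMeasure (P i)] [∀ i, IsProbabilityMeasure (Q i)] {P' : Measure Ω₁}
    {Q' : Measure Ω₂} [SigmaFinite P'] [SigmaFinite Q'] (hP : ∀ i, P i ≪ P') (hQ : ∀ i, Q i ≪ Q')
    (hPQ : ∀ f : (ι → ℝ) → ℝ, ConvexOn ℝ univ f →
      Integrable (fun x => f (rnDerivVec P P' x)) P' →
      Integrable (fun ω => f (rnDerivVec Q Q' ω)) Q' →
      ∫ x, f (rnDerivVec P P' x) ∂P' ≤ ∫ ω, f (rnDerivVec Q Q' ω) ∂Q')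
    {f : (ι → ℝ) → ℝ} (hf : ConvexOn ℝ univ f) :
    ∫ x, f (rnDerivVec P (uniformMixture P) x) ∂uniformMixture P ≤
      ∫ ω, f (rnDerivVec Q (uniformMixture Q) ω) ∂uniformMixture Q := by
  cases isEmpty_or_nonempty ι
  · simp [uniformMixture]
  have hfc : Continuous f := continuousOn_univ.1 (hf.continuousOn isOpen_univ)
  have hcard : (Fintype.card ι : ℝ) ≠ 0 := by simp
  refine le_of_forall_pos_le_add fun ε hε => ?_
  obtain ⟨G, hG_conv, hG_cont, hG_hom, hGf⟩ := hf.exists_homogeneous_approx hfc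
    ((Fintype.card ι : ℝ)⁻¹ • ∑ i, ContinuousLinearMap.proj i)
    (isCompact_setOf_nonneg_sum_eq (Fintype.card ι : ℝ)) (fun z hz => by simp [hz.2, hcard]) hε
  have hP_mix := absolutelyContinuous_uniformMixture P
  have hQ_mix := absolutelyContinuous_uniformMixture Q
  have hmix_P' := uniformMixture_absolutelyContinuous P hP
  have hmix_Q' := uniformMixture_absolutelyContinuous Q hQ
  have hP_int := (integrable_comp_rnDerivVec_iff_of_homogeneous hP_mix hmix_P' hG_hom).2
    (integrable_comp_rnDerivVec_uniformMixture P hG_cont)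
  have hQ_int := (integrable_comp_rnDerivVec_iff_of_homogeneous hQ_mix hmix_Q' hG_hom).2
    (integrable_comp_rnDerivVec_uniformMixture Q hG_cont)
  calc ∫ x, f (rnDerivVec P (uniformMixture P) x) ∂uniformMixture P
      ≤ ∫ x, (G (rnDerivVec P (uniformMixture P) x) + ε) ∂uniformMixture P :=
        integral_comp_rnDerivVec_uniformMixture_mono P (h := fun z => G z + ε) hfc
          (hG_cont.add continuous_const) fun z h0 h1 => by linarith [(hGf z ⟨h0, h1⟩).2]
    _ = ∫ x, G (rnDerivVec P P' x) ∂P' + ε := by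
        rw [integral_add (integrable_comp_rnDerivVec_uniformMixture P hG_cont) (integrable_const ε),
          integral_comp_rnDerivVec_of_homogeneous hP_mix hmix_P' hG_hom, integral_const,
          probReal_univ, one_smul]
    _ ≤ ∫ ω, G (rnDerivVec Q Q' ω) ∂Q' + ε := by linarith [hPQ G hG_conv hP_int hQ_int]
    _ = ∫ ω, G (rnDerivVec Q (uniformMixture Q) ω) ∂uniformMixture Q + ε := by
        rw [integral_comp_rnDerivVec_of_homogeneous hQ_mix hmix_Q' hG_hom]
    _ ≤ ∫ ω, f (rnDerivVec Q (uniformMixture Q) ω) ∂uniformMixture Q + ε := by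
        linarith [integral_comp_rnDerivVec_uniformMixture_mono Q hG_cont hfc
          fun z h0 h1 => (hGf z ⟨h0, h1⟩).1]

end MeasureTheory

theorem convex_order_transfers_to_averages_general
    {Ω₁ Ω₂ : Type} [MeasurableSpace Ω₁] [MeasurableSpace Ω₂]
    (n : ℕ)
    (P : Fin n → Measure Ω₁) (Q : Fin n → Measure Ω₂)
    [∀ i, IsProbabilityMeasure (P i)] [∀ i, IsProbabilityMeasure (Q i)]
    (hex : ∃ (P' : Measure Ω₁) (Q' : Measure Ω₂),
      IsProbabilityMeasure P' ∧ IsProbabilityMeasure Q' ∧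
      (∀ i, P i ≪ P') ∧ (∀ i, Q i ≪ Q') ∧
      ∀ f : (Fin n → ℝ) → ℝ, ConvexOn ℝ Set.univ f →
        Integrable (fun x => f (fun i => ((P i).rnDeriv P' x).toReal)) P' →
        Integrable (fun ω => f (fun i => ((Q i).rnDeriv Q' ω).toReal)) Q' →
        ∫ x, f (fun i => ((P i).rnDeriv P' x).toReal) ∂P' ≤
          ∫ ω, f (fun i => ((Q i).rnDeriv Q' ω).toReal) ∂Q') :
    ∀ f : (Fin n → ℝ) → ℝ, ConvexOn ℝ Set.univ f →
      ∫ x, f (fun i =>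
          ((P i).rnDeriv ((n : ℝ≥0∞)⁻¹ • ∑ j, P j) x).toReal) ∂((n : ℝ≥0∞)⁻¹ • ∑ j, P j) ≤
        ∫ ω, f (fun i =>
          ((Q i).rnDeriv ((n : ℝ≥0∞)⁻¹ • ∑ j, Q j) ω).toReal) ∂((n : ℝ≥0∞)⁻¹ • ∑ j, Q j) := by
  obtain ⟨P', Q', _, _, hP, hQ, hPQ⟩ := hex
  intro f hf
  have h := integral_comp_rnDerivVec_uniformMixture_le hP hQ hPQ hf
  simp only [uniformMixture, Fintype.card_fin] at h
  exact h

/-- Lemma 3.5, (i) ⇒ (ii). If the vector of Radon–Nikodym derivatives of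
`(P₁,…,Pₙ)` with respect to some dominating reference probability measure `P'` is dominated
in multivariate convex order (expectations taken whenever they exist) by that of `(Q₁,…,Qₙ)`
with respect to some dominating reference `Q'`, then the same convex order relation holds
with the averages `P = (1/n)∑ Pᵢ` and `Q = (1/n)∑ Qᵢ` as reference measures. -/
theorem convex_order_transfers_to_averages
    {Ω₁ Ω₂ : Type} [MeasurableSpace Ω₁] [MeasurableSpace Ω₂]
    (n : ℕ) (hn : 0 < n)
    (P : Fin n → Measure Ω₁) (Q : Fin n → Measure Ω₂)
    [∀ i, IsProbabilityMeasure (P i)] [∀ i, IsProbabilityMeasure (Q i)]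
    (hex : ∃ (P' : Measure Ω₁) (Q' : Measure Ω₂),
      IsProbabilityMeasure P' ∧ IsProbabilityMeasure Q' ∧
      (∀ i, P i ≪ P') ∧ (∀ i, Q i ≪ Q') ∧
      ∀ f : (Fin n → ℝ) → ℝ, ConvexOn ℝ Set.univ f →
        Integrable (fun x => f (fun i => ((P i).rnDeriv P' x).toReal)) P' →
        Integrable (fun ω => f (fun i => ((Q i).rnDeriv Q' ω).toReal)) Q' →
        ∫ x, f (fun i => ((P i).rnDeriv P' x).toReal) ∂P' ≤
          ∫ ω, f (fun i => ((Q i).rnDeriv Q' ω).toReal) ∂Q') :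
    ∀ f : (Fin n → ℝ) → ℝ, ConvexOn ℝ Set.univ f →
      ∫ x, f (fun i =>
          ((P i).rnDeriv ((n : ℝ≥0∞)⁻¹ • ∑ j, P j) x).toReal) ∂((n : ℝ≥0∞)⁻¹ • ∑ j, P j) ≤
        ∫ ω, f (fun i =>
          ((Q i).rnDeriv ((n : ℝ≥0∞)⁻¹ • ∑ j, Q j) ω).toReal) ∂((n : ℝ≥0∞)⁻¹ • ∑ j, Q j) :=
  convex_order_transfers_to_averages_general n P Q hex
end

section
/- Let $(P_1,\dots,P_n)$ and $(Q_1,\dots,Q_n)$ be tuples of probability measures. If $Q_1,\dots,Q_n$ are all identical and $(P_1,\dots,P_n)\prec_h(Q_1,\dots,Q_n)$, then $P_1,\dots,P_n$ are all identical. -/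
open MeasureTheory Set

/-!
Test the convex order with the convex function `x ↦ |xᵢ - xⱼ|`. On the `Q` side the densities
of `Qᵢ` and `Qⱼ` coincide, so the right-hand side is `0`; hence `∫ |dPᵢ/dP' - dPⱼ/dP'| dP' ≤ 0`,
the two densities agree `P'`-a.e., and `Pᵢ = Pⱼ`.
-/

theorem convexOn_abs_sub_apply {ι : Type*} (i j : ι) :
    ConvexOn ℝ univ fun x : ι → ℝ => |x i - x j| := by
  have h := (convexOn_univ_norm (E := ℝ)).comp_linearMap
    (LinearMap.proj (R := ℝ) (φ := fun _ : ι => ℝ) i - LinearMap.proj j)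
  rw [preimage_univ] at h
  exact h

namespace MeasureTheory.Measure

variable {α : Type*} [MeasurableSpace α] {μ₁ μ₂ ν : Measure α}

theorem eq_of_absolutelyContinuous_of_rnDeriv_ae_eq [μ₁.HaveLebesgueDecomposition ν]
    [μ₂.HaveLebesgueDecomposition ν] (h₁ : μ₁ ≪ ν) (h₂ : μ₂ ≪ ν)
    (h : μ₁.rnDeriv ν =ᵐ[ν] μ₂.rnDeriv ν) : μ₁ = μ₂ := by
  rw [← withDensity_rnDeriv_eq μ₁ ν h₁, ← withDensity_rnDeriv_eq μ₂ ν h₂,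
    withDensity_congr_ae h]

theorem integrable_abs_sub_toReal_rnDeriv [IsFiniteMeasure μ₁] [IsFiniteMeasure μ₂] :
    Integrable (fun x => |(μ₁.rnDeriv ν x).toReal - (μ₂.rnDeriv ν x).toReal|) ν :=
  (integrable_toReal_rnDeriv.sub integrable_toReal_rnDeriv).abs

theorem rnDeriv_ae_eq_of_integral_abs_sub_toReal_rnDeriv_nonpos
    [IsFiniteMeasure μ₁] [IsFiniteMeasure μ₂]
    (h : ∫ x, |(μ₁.rnDeriv ν x).toReal - (μ₂.rnDeriv ν x).toReal| ∂ν ≤ 0) :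
    μ₁.rnDeriv ν =ᵐ[ν] μ₂.rnDeriv ν := by
  have hnonneg : 0 ≤ᵐ[ν] fun x => |(μ₁.rnDeriv ν x).toReal - (μ₂.rnDeriv ν x).toReal| :=
    ae_of_all _ fun _ => abs_nonneg _
  have hzero := (integral_eq_zero_iff_of_nonneg_ae hnonneg integrable_abs_sub_toReal_rnDeriv).mp
    (le_antisymm h (integral_nonneg_of_ae hnonneg))
  filter_upwards [hzero, μ₁.rnDeriv_lt_top ν, μ₂.rnDeriv_lt_top ν] with x hx h₁ h₂
  rw [Pi.zero_apply, abs_eq_zero, sub_eq_zero] at hx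
  exact (ENNReal.toReal_eq_toReal_iff' h₁.ne h₂.ne).mp hx

end MeasureTheory.Measure

theorem het_order_with_identical_implies_identical_general
    {Ω₁ Ω₂ : Type} [MeasurableSpace Ω₁] [MeasurableSpace Ω₂]
    (n : ℕ)
    (P : Fin n → Measure Ω₁) (Q : Fin n → Measure Ω₂)
    [∀ i, IsProbabilityMeasure (P i)]
    (hQ : ∀ i j, Q i = Q j)
    (hh : ∃ (P' : Measure Ω₁) (Q' : Measure Ω₂),
      IsProbabilityMeasure P' ∧ IsProbabilityMeasure Q' ∧
      (∀ i, P i ≪ P') ∧ (∀ i, Q i ≪ Q') ∧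
      ∀ f : (Fin n → ℝ) → ℝ, ConvexOn ℝ Set.univ f →
        Integrable (fun x => f (fun i => ((P i).rnDeriv P' x).toReal)) P' →
        Integrable (fun ω => f (fun i => ((Q i).rnDeriv Q' ω).toReal)) Q' →
        ∫ x, f (fun i => ((P i).rnDeriv P' x).toReal) ∂P' ≤
          ∫ ω, f (fun i => ((Q i).rnDeriv Q' ω).toReal) ∂Q') :
    ∀ i j, P i = P j := by
  obtain ⟨P', Q', _, -, hP, -, hconv⟩ := hh
  intro i j
  have hle := hconv _ (convexOn_abs_sub_apply i j) Measure.integrable_abs_sub_toReal_rnDeriv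
    (by simp [hQ i j])
  simp only [hQ i j, sub_self, abs_zero, integral_zero] at hle
  exact Measure.eq_of_absolutelyContinuous_of_rnDeriv_ae_eq (hP i) (hP j)
    (Measure.rnDeriv_ae_eq_of_integral_abs_sub_toReal_rnDeriv_nonpos hle)

/-- Proposition 3.6 (ii). If `Q₁,…,Qₙ` are all identical and
`(P₁,…,Pₙ) ≺ₕ (Q₁,…,Qₙ)` (heterogeneity order: for some dominating reference probability
measures `P'` and `Q'`, the vector of Radon–Nikodym derivatives of the `Pᵢ` is dominated in
multivariate convex order by that of the `Qᵢ`), then `P₁,…,Pₙ` are all identical. -/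
theorem het_order_with_identical_implies_identical
    {Ω₁ Ω₂ : Type} [MeasurableSpace Ω₁] [MeasurableSpace Ω₂]
    (n : ℕ) (hn : 0 < n)
    (P : Fin n → Measure Ω₁) (Q : Fin n → Measure Ω₂)
    [∀ i, IsProbabilityMeasure (P i)] [∀ i, IsProbabilityMeasure (Q i)]
    (hQ : ∀ i j, Q i = Q j)
    (hh : ∃ (P' : Measure Ω₁) (Q' : Measure Ω₂),
      IsProbabilityMeasure P' ∧ IsProbabilityMeasure Q' ∧
      (∀ i, P i ≪ P') ∧ (∀ i, Q i ≪ Q') ∧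
      ∀ f : (Fin n → ℝ) → ℝ, ConvexOn ℝ Set.univ f →
        Integrable (fun x => f (fun i => ((P i).rnDeriv P' x).toReal)) P' →
        Integrable (fun ω => f (fun i => ((Q i).rnDeriv Q' ω).toReal)) Q' →
        ∫ x, f (fun i => ((P i).rnDeriv P' x).toReal) ∂P' ≤
          ∫ ω, f (fun i => ((Q i).rnDeriv Q' ω).toReal) ∂Q') :
    ∀ i j, P i = P j :=
  het_order_with_identical_implies_identical_general n P Q hQ hh
end

section
/- Let $(P_1,\dots,P_n)$ and $(Q_1,\dots,Q_n)$ be tuples of probability measures on two measurable spaces. If $Q_1,\dots,Q_n$ are mutually singular, then $(P_1,\dots,P_n)\prec_h(Q_1,\dots,Q_n)$; that is, with $P=\frac1n\sum P_i$ and $Q=\frac1n\sum Q_i$, for every convex $f:\mathbb{R}^n\to\mathbb{R}$ one has $\int f(\frac{dP_1}{dP},\dots,\frac{dP_n}{dP})\,dP \le \int f(\frac{dQ_1}{dQ},\dots,\frac{dQ_n}{dQ})\,dQ$. -/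
open MeasureTheory Finset
open scoped ENNReal

/-!
The density vector `s = (dPᵢ/dP̄)ᵢ` takes values in the simplex `{s ≥ 0, ∑ sᵢ = n}` and satisfies
`∫ sᵢ dP̄ = 1`. On this simplex a convex `f` lies below the affine function
`L(s) = ∑ sᵢ/n · f(n eᵢ)` that agrees with it at the vertices, so
`∫ f(s) dP̄ ≤ ∫ L(s) dP̄ = (1/n) ∑ f(n eᵢ)`. When the `Qᵢ` are mutually singular, their density
vector is a.e. a vertex, where `f = L`; so the `Q` side equals this bound.
-/

theorem ConvexOn.le_sum_div_mul_single {ι : Type*} [Fintype ι] [DecidableEq ι]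
    {f : (ι → ℝ) → ℝ} (hf : ConvexOn ℝ Set.univ f) {c : ℝ} (hc : 0 < c) {s : ι → ℝ}
    (hs₀ : ∀ i, 0 ≤ s i) (hs : ∑ i, s i = c) :
    f s ≤ ∑ i, s i / c * f (Pi.single i c) := by
  have hcomb : ∑ i, (s i / c) • Pi.single i c = s := by
    conv_rhs => rw [← Finset.univ_sum_single s]
    refine Finset.sum_congr rfl fun i _ => ?_
    rw [← Pi.single_smul, smul_eq_mul, div_mul_cancel₀ _ hc.ne']
  have hw : ∑ i, s i / c = 1 := by rw [← Finset.sum_div, hs, div_self hc.ne']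
  have := hf.map_sum_le (p := fun i => Pi.single i c) (fun i _ => div_nonneg (hs₀ i) hc.le) hw
    (fun i _ => Set.mem_univ _)
  simpa only [hcomb, smul_eq_mul] using this

theorem sum_single_div_mul_single {ι : Type*} [Fintype ι] [DecidableEq ι]
    (g : (ι → ℝ) → ℝ) {c : ℝ} (hc : c ≠ 0) (k : ι) :
    ∑ i, (Pi.single k c : ι → ℝ) i / c * g (Pi.single i c) = g (Pi.single k c) := by
  rw [Finset.sum_eq_single k (fun i _ hi => by simp [hi]) (by simp)]
  simp [hc]

theorem exists_eq_single_of_sum_eq {ι : Type*} [Fintype ι] [DecidableEq ι] {s : ι → ℝ} {c : ℝ}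
    (hc : c ≠ 0) (hs : ∑ i, s i = c) (hdisj : Pairwise fun j k => s j = 0 ∨ s k = 0) :
    ∃ k, s = Pi.single k c := by
  obtain ⟨k, -, hk⟩ := Finset.exists_ne_zero_of_sum_ne_zero (hs ▸ hc)
  have hzero : ∀ j ≠ k, s j = 0 := fun j hj => (hdisj hj).resolve_right hk
  have hsk : s k = c := by
    rwa [Finset.sum_eq_single k (fun j _ hj => hzero j hj) (by simp)] at hs
  refine ⟨k, funext fun j => ?_⟩
  by_cases hj : j = k
  · subst hj; simp [hsk]
  · simp [hj, hzero j hj]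

theorem MeasureTheory.Measure.rnDeriv_finsetSum {ι Ω : Type*} [MeasurableSpace Ω]
    (s : Finset ι) (ν : ι → Measure Ω) (μ : Measure Ω) [∀ i, IsFiniteMeasure (ν i)]
    [SigmaFinite μ] :
    (∑ i ∈ s, ν i).rnDeriv μ =ᵐ[μ] ∑ i ∈ s, (ν i).rnDeriv μ := by
  classical
  induction s using Finset.induction with
  | empty => simp
  | insert a s ha ih =>
    rw [Finset.sum_insert ha, Finset.sum_insert ha]
    exact (Measure.rnDeriv_add _ _ _).trans ((Filter.EventuallyEq.refl _ _).add ih)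

namespace Heterogeneity

variable {ι Ω : Type*} [Fintype ι] [MeasurableSpace Ω]

noncomputable def uniformMixture (P : ι → Measure Ω) : Measure Ω :=
  (Fintype.card ι : ℝ≥0∞)⁻¹ • ∑ j, P j

noncomputable def densityVector (P : ι → Measure Ω) (x : Ω) : ι → ℝ :=
  fun i => ((P i).rnDeriv (uniformMixture P) x).toReal

theorem uniformMixture_fin {n : ℕ} (P : Fin n → Measure Ω) :
    uniformMixture P = (n : ℝ≥0∞)⁻¹ • ∑ j, P j := by
  rw [uniformMixture, Fintype.card_fin]

variable (P : ι → Measure Ω)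

theorem absolutelyContinuous_uniformMixture (i : ι) : P i ≪ uniformMixture P := by
  refine Measure.AbsolutelyContinuous.trans ?_
    (Measure.absolutelyContinuous_smul (ENNReal.inv_ne_zero.mpr (ENNReal.natCast_ne_top _)))
  exact Measure.absolutelyContinuous_of_le
    (Finset.single_le_sum (f := P) (fun _ _ => bot_le) (Finset.mem_univ i))

theorem densityVector_nonneg (x : Ω) (i : ι) : 0 ≤ densityVector P x i := ENNReal.toReal_nonneg

theorem measurable_densityVector : Measurable (densityVector P) :=
  measurable_pi_lambda _ fun _ => (Measure.measurable_rnDeriv _ _).ennreal_toReal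

variable [Nonempty ι]

theorem card_smul_uniformMixture : (Fintype.card ι : ℝ≥0∞) • uniformMixture P = ∑ j, P j := by
  rw [uniformMixture, smul_smul, ENNReal.mul_inv_cancel (by simp) (ENNReal.natCast_ne_top _),
    one_smul]

variable [∀ i, IsProbabilityMeasure (P i)]

instance isProbabilityMeasure_uniformMixture : IsProbabilityMeasure (uniformMixture P) := by
  constructor
  simp only [uniformMixture, Measure.smul_apply, Measure.coe_finsetSum, Finset.sum_apply,
    measure_univ, Finset.sum_const, Finset.card_univ, nsmul_eq_mul, mul_one, smul_eq_mul]
  exact ENNReal.inv_mul_cancel (by simp) (ENNReal.natCast_ne_top _)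

theorem ae_sum_rnDeriv_uniformMixture :
    ∀ᵐ x ∂uniformMixture P, ∑ i, (P i).rnDeriv (uniformMixture P) x = Fintype.card ι := by
  have hsum := Measure.rnDeriv_finsetSum Finset.univ P (uniformMixture P)
  rw [← card_smul_uniformMixture] at hsum
  filter_upwards [hsum, Measure.rnDeriv_smul_left_of_ne_top (uniformMixture P) (uniformMixture P)
    (ENNReal.natCast_ne_top (Fintype.card ι)), Measure.rnDeriv_self (uniformMixture P)]
    with x hx hsmul hself
  simpa [hsmul, hself] using hx.symm

theorem ae_sum_densityVector :
    ∀ᵐ x ∂uniformMixture P, ∑ i, densityVector P x i = Fintype.card ι := by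
  filter_upwards [ae_sum_rnDeriv_uniformMixture P] with x hx
  have hfin : ∀ i ∈ Finset.univ, (P i).rnDeriv (uniformMixture P) x ≠ ∞ :=
    ENNReal.sum_ne_top.mp (hx ▸ ENNReal.natCast_ne_top _)
  simp only [densityVector, ← ENNReal.toReal_sum hfin, hx, ENNReal.toReal_natCast]

theorem ae_norm_densityVector_le :
    ∀ᵐ x ∂uniformMixture P, ‖densityVector P x‖ ≤ Fintype.card ι := by
  filter_upwards [ae_sum_densityVector P] with x hx
  refine (pi_norm_le_iff_of_nonneg (Nat.cast_nonneg _)).mpr fun i => ?_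
  rw [Real.norm_of_nonneg (densityVector_nonneg P x i), ← hx]
  exact Finset.single_le_sum (fun j _ => densityVector_nonneg P x j) (Finset.mem_univ i)

theorem integrable_comp_densityVector {g : (ι → ℝ) → ℝ} (hg : Continuous g) :
    Integrable (fun x => g (densityVector P x)) (uniformMixture P) := by
  obtain ⟨C, hC⟩ := (isCompact_closedBall (0 : ι → ℝ) (Fintype.card ι)).exists_bound_of_continuousOn
    hg.continuousOn
  refine Integrable.of_bound (hg.measurable.comp (measurable_densityVector P)).aestronglyMeasurable
    C ?_
  filter_upwards [ae_norm_densityVector_le P] with x hx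
  exact hC _ (mem_closedBall_zero_iff.mpr hx)

theorem integral_densityVector_apply (i : ι) : ∫ x, densityVector P x i ∂uniformMixture P = 1 := by
  simp [densityVector, Measure.integral_toReal_rnDeriv (absolutelyContinuous_uniformMixture P i)]

theorem integrable_sum_densityVector_div_mul (a : ι → ℝ) :
    Integrable (fun x => ∑ i, densityVector P x i / Fintype.card ι * a i) (uniformMixture P) :=
  integrable_finsetSum _ fun i _ =>
    ((integrable_comp_densityVector P (continuous_apply i)).div_const _).mul_const _

theorem integral_sum_densityVector_div_mul (a : ι → ℝ) :
    ∫ x, ∑ i, densityVector P x i / Fintype.card ι * a i ∂uniformMixture P =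
      ∑ i, a i / Fintype.card ι := by
  rw [integral_finsetSum _ fun i _ =>
    ((integrable_comp_densityVector P (continuous_apply i)).div_const _).mul_const _]
  refine Finset.sum_congr rfl fun i _ => ?_
  rw [integral_mul_const, integral_div, integral_densityVector_apply]
  ring

theorem integral_comp_densityVector_le [DecidableEq ι] {f : (ι → ℝ) → ℝ}
    (hf : ConvexOn ℝ Set.univ f) :
    ∫ x, f (densityVector P x) ∂uniformMixture P ≤
      ∑ i, f (Pi.single i (Fintype.card ι : ℝ)) / Fintype.card ι := by
  have hcont : Continuous f := continuousOn_univ.mp (hf.continuousOn isOpen_univ)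
  rw [← integral_sum_densityVector_div_mul P]
  refine integral_mono_ae (integrable_comp_densityVector P hcont)
    (integrable_sum_densityVector_div_mul P _) ?_
  filter_upwards [ae_sum_densityVector P] with x hx
  exact hf.le_sum_div_mul_single (by positivity) (densityVector_nonneg P x) hx

theorem ae_exists_densityVector_eq_single [DecidableEq ι]
    (hsing : Pairwise fun i j => P i ⟂ₘ P j) :
    ∀ᵐ x ∂uniformMixture P, ∃ k, densityVector P x = Pi.single k (Fintype.card ι : ℝ) := by
  have hdisj : ∀ᵐ x ∂uniformMixture P, ∀ j k, j ≠ k →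
      (P k).rnDeriv (uniformMixture P) x ≠ 0 → (P j).rnDeriv (uniformMixture P) x = 0 := by
    refine ae_all_iff.mpr fun j => ae_all_iff.mpr fun k => ?_
    -- `Pⱼ ⟂ₘ Pₖ` makes `dPⱼ/dP̄` vanish `Pₖ`-a.e., i.e. a.e. where `dPₖ/dP̄ ≠ 0`.
    by_cases hjk : j = k
    · exact Filter.Eventually.of_forall fun _ h => absurd hjk h
    · filter_upwards [Measure.ae_rnDeriv_ne_zero_imp_of_ae (uniformMixture P)
        (Measure.rnDeriv_eq_zero_of_mutuallySingular (hsing hjk)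
          (absolutelyContinuous_uniformMixture P k))] with x hx using fun _ hk => hx hk
  filter_upwards [ae_sum_densityVector P, hdisj] with x hsum hx
  refine exists_eq_single_of_sum_eq (by positivity) hsum fun j k hjk => ?_
  by_cases hk : (P k).rnDeriv (uniformMixture P) x = 0
  · exact Or.inr (by simp [densityVector, hk])
  · exact Or.inl (by simp [densityVector, hx j k hjk hk])

theorem integral_comp_densityVector_of_pairwise_mutuallySingular [DecidableEq ι]
    (hsing : Pairwise fun i j => P i ⟂ₘ P j) (f : (ι → ℝ) → ℝ) :
    ∫ x, f (densityVector P x) ∂uniformMixture P =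
      ∑ i, f (Pi.single i (Fintype.card ι : ℝ)) / Fintype.card ι := by
  rw [← integral_sum_densityVector_div_mul P]
  refine integral_congr_ae ?_
  filter_upwards [ae_exists_densityVector_eq_single P hsing] with x ⟨k, hk⟩
  rw [hk, sum_single_div_mul_single f (by positivity) k]

end Heterogeneity

/-- Proposition 3.6 (iv). If `Q₁,…,Qₙ` are mutually singular, then
`(P₁,…,Pₙ) ≺ₕ (Q₁,…,Qₙ)`: with `P = (1/n)∑ Pᵢ` and `Q = (1/n)∑ Qᵢ`, for every convex
`f : ℝⁿ → ℝ` one has `∫ f(dP₁/dP,…,dPₙ/dP) dP ≤ ∫ f(dQ₁/dQ,…,dQₙ/dQ) dQ`. -/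
theorem mutually_singular_dominates_in_heterogeneity
    {Ω₁ Ω₂ : Type} [MeasurableSpace Ω₁] [MeasurableSpace Ω₂]
    (n : ℕ) (hn : 0 < n)
    (P : Fin n → Measure Ω₁) (Q : Fin n → Measure Ω₂)
    [∀ i, IsProbabilityMeasure (P i)] [∀ i, IsProbabilityMeasure (Q i)]
    (hsing : Pairwise fun i j => Q i ⟂ₘ Q j) :
    ∀ f : (Fin n → ℝ) → ℝ, ConvexOn ℝ Set.univ f →
      ∫ x, f (fun i =>
          ((P i).rnDeriv ((n : ℝ≥0∞)⁻¹ • ∑ j, P j) x).toReal) ∂((n : ℝ≥0∞)⁻¹ • ∑ j, P j) ≤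
        ∫ ω, f (fun i =>
          ((Q i).rnDeriv ((n : ℝ≥0∞)⁻¹ • ∑ j, Q j) ω).toReal) ∂((n : ℝ≥0∞)⁻¹ • ∑ j, Q j) := by
  intro f hf
  have : Nonempty (Fin n) := ⟨⟨0, hn⟩⟩
  rw [← Heterogeneity.uniformMixture_fin P, ← Heterogeneity.uniformMixture_fin Q]
  exact (Heterogeneity.integral_comp_densityVector_le P hf).trans
    (Heterogeneity.integral_comp_densityVector_of_pairwise_mutuallySingular Q hsing f).ge
end

section
/- Let $(P_1,\dots,P_n)$ and $(Q_1,\dots,Q_n)$ be tuples of probability measures with $Q_1,\dots,Q_n$ pairwise equivalent (mutually absolutely continuous). If $(P_1,\dots,P_n)\prec_h(Q_1,\dots,Q_n)$, then $P_1,\dots,P_n$ are pairwise equivalent. -/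
/-!
Write `μ` for the average of the `Pᵢ` and `gᵢ = dPᵢ/dμ`, and similarly `ν`, `qᵢ` for the `Qᵢ`.
Testing the heterogeneity order against the convex functions `x ↦ max (xᵢ - k xⱼ) 0` gives
`Pᵢ {gⱼ = 0} ≤ ∫ max (qᵢ - k qⱼ) 0 dν` for every `k`. Since the `Qᵢ` are equivalent, `qⱼ > 0`
`ν`-a.e., so the right-hand side tends to `0` as `k → ∞` by dominated convergence. Hence
`Pᵢ {gⱼ = 0} = 0`, which together with `Pⱼ = gⱼ μ` gives `Pᵢ ≪ Pⱼ`.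
-/

open MeasureTheory Filter
open scoped ENNReal Topology

lemma convexOn_max_sub_mul_zero {ι : Type*} (i j : ι) (k : ℝ) :
    ConvexOn ℝ Set.univ (fun x : ι → ℝ => max (x i - k * x j) 0) :=
  ((LinearMap.proj i - k • LinearMap.proj j : (ι → ℝ) →ₗ[ℝ] ℝ).convexOn convex_univ).sup
    (convexOn_const 0 convex_univ)

lemma abs_max_sub_zero_le {a b : ℝ} (hb : 0 ≤ b) : |max (a - b) 0| ≤ |a| := by
  rw [abs_of_nonneg (le_max_right _ _)]
  exact max_le (by linarith [le_abs_self a]) (abs_nonneg a)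

namespace MeasureTheory

variable {Ω ι : Type*} [MeasurableSpace Ω]

lemma tendsto_integral_max_sub_nat_mul_zero {μ : Measure Ω} {f g : Ω → ℝ} (hf : Integrable f μ)
    (hg : AEStronglyMeasurable g μ) (hg_pos : ∀ᵐ x ∂μ, 0 < g x) :
    Tendsto (fun k : ℕ => ∫ x, max (f x - k * g x) 0 ∂μ) atTop (𝓝 0) := by
  have hlim : Tendsto (fun k : ℕ => ∫ x, max (f x - k * g x) 0 ∂μ) atTop
      (𝓝 (∫ _, (0 : ℝ) ∂μ)) := by
    refine tendsto_integral_of_dominated_convergence (fun x => |f x|)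
      (fun k => (hf.aestronglyMeasurable.sub (hg.const_mul _)).sup aestronglyMeasurable_const)
      hf.abs (fun k => ?_) ?_
    · filter_upwards [hg_pos] with x hx
      exact abs_max_sub_zero_le (by positivity)
    · filter_upwards [hg_pos] with x hx
      refine tendsto_const_nhds.congr' ?_
      filter_upwards [(tendsto_natCast_atTop_atTop.atTop_mul_const hx).eventually_ge_atTop (f x)]
        with k hk
      exact (max_eq_right (sub_nonpos.2 hk)).symm
  rwa [integral_zero] at hlim

namespace Measure

lemma absolutelyContinuous_smul_sum [Fintype ι] (μ : ι → Measure Ω) {c : ℝ≥0∞} (hc : c ≠ 0)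
    (i : ι) : μ i ≪ c • ∑ j, μ j :=
  (absolutelyContinuous_of_le <|
    Finset.single_le_sum (fun _ _ => Measure.zero_le _) (Finset.mem_univ i)).smul_right hc

lemma smul_sum_absolutelyContinuous [Fintype ι] {μ : ι → Measure Ω} {ν : Measure Ω} (c : ℝ≥0∞)
    (h : ∀ i, μ i ≪ ν) : c • ∑ j, μ j ≪ ν := by
  refine smul_absolutelyContinuous.trans fun s hs => ?_
  simp [fun i => h i hs]

lemma absolutelyContinuous_of_measure_rnDeriv_eq_zero {ρ σ μ : Measure Ω}
    [σ.HaveLebesgueDecomposition μ] (hρ : ρ ≪ μ) (hσ : σ ≪ μ)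
    (h : ρ {x | σ.rnDeriv μ x = 0} = 0) : ρ ≪ σ := by
  intro s hs
  rw [← withDensity_rnDeriv_eq σ μ hσ,
    withDensity_apply_eq_zero' (measurable_rnDeriv σ μ).aemeasurable] at hs
  refine measure_mono_null (fun x hx => ?_) (measure_union_null (hρ hs) h)
  by_cases hx0 : σ.rnDeriv μ x = 0
  · exact Or.inr hx0
  · exact Or.inl ⟨hx0, hx⟩

lemma measureReal_setOf_rnDeriv_eq_zero_le_integral {ρ σ μ : Measure Ω} [IsFiniteMeasure ρ]
    [SigmaFinite μ] (hρ : ρ ≪ μ) {k : ℝ} (hk : 0 ≤ k) :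
    ρ.real {x | σ.rnDeriv μ x = 0} ≤
      ∫ x, max ((ρ.rnDeriv μ x).toReal - k * (σ.rnDeriv μ x).toReal) 0 ∂μ := by
  have hA : MeasurableSet {x | σ.rnDeriv μ x = 0} :=
    measurable_rnDeriv σ μ (measurableSet_singleton 0)
  have hint : Integrable
      (fun x => max ((ρ.rnDeriv μ x).toReal - k * (σ.rnDeriv μ x).toReal) 0) μ :=
    integrable_toReal_rnDeriv.mono (by fun_prop)
      (ae_of_all _ fun x => abs_max_sub_zero_le (by positivity))
  calc ρ.real {x | σ.rnDeriv μ x = 0}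
      = ∫ x in {x | σ.rnDeriv μ x = 0}, (ρ.rnDeriv μ x).toReal ∂μ :=
        (setIntegral_toReal_rnDeriv hρ _).symm
    _ = ∫ x in {x | σ.rnDeriv μ x = 0},
          max ((ρ.rnDeriv μ x).toReal - k * (σ.rnDeriv μ x).toReal) 0 ∂μ :=
        setIntegral_congr_fun hA fun x hx => by simp [show σ.rnDeriv μ x = 0 from hx]
    _ ≤ _ := setIntegral_le_integral hint (ae_of_all _ fun _ => le_max_right _ _)

end Measure

end MeasureTheory

theorem het_order_preserves_equivalence_general
    {Ω₁ Ω₂ : Type} [MeasurableSpace Ω₁] [MeasurableSpace Ω₂]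
    (n : ℕ)
    (P : Fin n → Measure Ω₁) (Q : Fin n → Measure Ω₂)
    [∀ i, IsProbabilityMeasure (P i)] [∀ i, IsProbabilityMeasure (Q i)]
    (hequiv : ∀ i j, Q i ≪ Q j)
    (hh : ∀ f : (Fin n → ℝ) → ℝ, ConvexOn ℝ Set.univ f →
      ∫ x, f (fun i =>
          ((P i).rnDeriv ((n : ℝ≥0∞)⁻¹ • ∑ j, P j) x).toReal) ∂((n : ℝ≥0∞)⁻¹ • ∑ j, P j) ≤
        ∫ ω, f (fun i =>
          ((Q i).rnDeriv ((n : ℝ≥0∞)⁻¹ • ∑ j, Q j) ω).toReal) ∂((n : ℝ≥0∞)⁻¹ • ∑ j, Q j)) :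
    ∀ i j, P i ≪ P j := by
  intro i j
  have hc : (n : ℝ≥0∞)⁻¹ ≠ 0 := ENNReal.inv_ne_zero.2 (ENNReal.natCast_ne_top n)
  have hc' : (n : ℝ≥0∞)⁻¹ ≠ ∞ := ENNReal.inv_ne_top.2 (Nat.cast_ne_zero.2 i.pos.ne')
  set μ := (n : ℝ≥0∞)⁻¹ • ∑ j, P j
  set ν := (n : ℝ≥0∞)⁻¹ • ∑ j, Q j
  have : IsFiniteMeasure μ := Measure.smul_finite _ hc'
  have : IsFiniteMeasure ν := Measure.smul_finite _ hc'
  have hνQ : ν ≪ Q j := Measure.smul_sum_absolutelyContinuous _ fun l => hequiv l j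
  have hpos : ∀ᵐ ω ∂ν, 0 < ((Q j).rnDeriv ν ω).toReal := by
    filter_upwards [Measure.rnDeriv_pos' hνQ, Measure.rnDeriv_lt_top (Q j) ν] with ω h0 htop
    exact ENNReal.toReal_pos h0.ne' htop.ne
  have hbound : ∀ k : ℕ, (P i).real {x | (P j).rnDeriv μ x = 0} ≤
      ∫ ω, max (((Q i).rnDeriv ν ω).toReal - k * ((Q j).rnDeriv ν ω).toReal) 0 ∂ν := fun k =>
    (Measure.measureReal_setOf_rnDeriv_eq_zero_le_integral
      (Measure.absolutelyContinuous_smul_sum P hc i) k.cast_nonneg).trans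
      (hh _ (convexOn_max_sub_mul_zero i j k))
  have hnull : (P i).real {x | (P j).rnDeriv μ x = 0} ≤ 0 :=
    ge_of_tendsto' (tendsto_integral_max_sub_nat_mul_zero Measure.integrable_toReal_rnDeriv
      (Measure.measurable_rnDeriv _ _).ennreal_toReal.aestronglyMeasurable hpos) hbound
  exact Measure.absolutelyContinuous_of_measure_rnDeriv_eq_zero
    (Measure.absolutelyContinuous_smul_sum P hc i) (Measure.absolutelyContinuous_smul_sum P hc j)
    ((measureReal_eq_zero_iff).1 (hnull.antisymm measureReal_nonneg))

/-- Proposition 3.6 (iii). If `Q₁,…,Qₙ` are pairwise equivalent (mutually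
absolutely continuous) and `(P₁,…,Pₙ) ≺ₕ (Q₁,…,Qₙ)` (multivariate convex order between the
vectors of Radon–Nikodym derivatives with respect to the average measures), then `P₁,…,Pₙ`
are pairwise equivalent. -/
theorem het_order_preserves_equivalence
    {Ω₁ Ω₂ : Type} [MeasurableSpace Ω₁] [MeasurableSpace Ω₂]
    (n : ℕ) (hn : 0 < n)
    (P : Fin n → Measure Ω₁) (Q : Fin n → Measure Ω₂)
    [∀ i, IsProbabilityMeasure (P i)] [∀ i, IsProbabilityMeasure (Q i)]
    (hequiv : ∀ i j, Q i ≪ Q j)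
    (hh : ∀ f : (Fin n → ℝ) → ℝ, ConvexOn ℝ Set.univ f →
      ∫ x, f (fun i =>
          ((P i).rnDeriv ((n : ℝ≥0∞)⁻¹ • ∑ j, P j) x).toReal) ∂((n : ℝ≥0∞)⁻¹ • ∑ j, P j) ≤
        ∫ ω, f (fun i =>
          ((Q i).rnDeriv ((n : ℝ≥0∞)⁻¹ • ∑ j, Q j) ω).toReal) ∂((n : ℝ≥0∞)⁻¹ • ∑ j, Q j)) :
    ∀ i j, P i ≪ P j :=
  het_order_preserves_equivalence_general n P Q hequiv hh
end

section
/- Let $P$ and $Q$ be equivalent probability measures on $(\Omega,\mathcal A)$ with $(P,Q)$ conditionally atomless, and $G$ a Borel probability measure on $\mathbb{R}$. Then the set $\{F : F$ is a Borel probability measure on $\mathbb{R}$ such that there exists a measurable $X:\Omega\to\mathbb{R}$ with $P\circ X^{-1}=F$ and $Q\circ X^{-1}=G\}$ is convex. -/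
/-!
Let `D = dP/dQ`. The `Q`-law of `(D, X)` determines both laws of `X`: its second marginal is the
`Q`-law, and its second marginal after reweighting by the first coordinate is the `P`-law. Both
depend linearly on the joint law, so it suffices to find `X` whose `Q`-joint law with `D` is the
mixture `ρ = t • Law_Q(D, X₁) + (1 - t) • Law_Q(D, X₂)`. Conditional atomlessness provides, after
passing from `R` to `Q` and applying the probability integral transform, a uniform variable `V`
that is `Q`-independent of `D`. Disintegrating `ρ` along its first marginal `Law_Q(D)` and
representing the conditional kernel as the image of the uniform law gives `X = f(D, V)`.
-/

open MeasureTheory ProbabilityTheory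
open scoped ENNReal

/-- `(P,Q)` is conditionally atomless: there exist a dominating probability measure `R` and a
random variable with atomless distribution under `R`, independent of `(dP/dR, dQ/dR)` under `R`. -/
def CondAtomlessPair {Ω : Type} [MeasurableSpace Ω] (P Q : Measure Ω) : Prop :=
  ∃ R : Measure Ω, IsProbabilityMeasure R ∧ P ≪ R ∧ Q ≪ R ∧
    ∃ Z : Ω → ℝ, Measurable Z ∧ (∀ x : ℝ, R.map Z {x} = 0) ∧
      IndepFun Z (fun ω => ((P.rnDeriv R ω).toReal, (Q.rnDeriv R ω).toReal)) R

open Set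
open scoped unitInterval

namespace MeasureTheory.Measure

variable {Ω α β γ : Type*} [MeasurableSpace Ω] [MeasurableSpace α] [MeasurableSpace β]
  [MeasurableSpace γ]

lemma map_withDensity_comp {μ : Measure Ω} {f : Ω → α} (hf : Measurable f) {g : α → ℝ≥0∞}
    (hg : Measurable g) : (μ.withDensity (g ∘ f)).map f = (μ.map f).withDensity g := by
  ext s hs
  rw [map_apply hf hs, withDensity_apply _ (hf hs), withDensity_apply _ hs,
    setLIntegral_map hs hg hf, Function.comp_def]

lemma fst_smul (c : ℝ≥0∞) (ρ : Measure (α × β)) : (c • ρ).fst = c • ρ.fst :=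
  Measure.map_smul _ _ _

lemma snd_smul (c : ℝ≥0∞) (ρ : Measure (α × β)) : (c • ρ).snd = c • ρ.snd :=
  Measure.map_smul _ _ _

lemma smul_add_one_sub_smul (μ : Measure α) {t : ℝ≥0∞} (ht : t ≤ 1) :
    t • μ + (1 - t) • μ = μ := by
  rw [← add_smul, add_tsub_cancel_of_le ht, one_smul]

lemma map_prod_eq_compProd (μ : Measure α) [SFinite μ] (ν : Measure γ) [SFinite ν]
    {f : α → γ → β} (hf : Measurable (Function.uncurry f)) (κ : Kernel α β) [IsSFiniteKernel κ]
    (hfκ : ∀ a, ν.map (f a) = κ a) :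
    (μ.prod ν).map (fun p => (p.1, f p.1 p.2)) = μ ⊗ₘ κ := by
  have hmeas : Measurable fun p : α × γ => (p.1, f p.1 p.2) := measurable_fst.prodMk hf
  ext s hs
  rw [map_apply hmeas hs, prod_apply (hmeas hs), compProd_apply hs]
  refine lintegral_congr fun a => ?_
  rw [← hfκ a, map_apply hf.of_uncurry_left (measurable_prodMk_left hs)]
  rfl

end MeasureTheory.Measure

namespace ProbabilityTheory

section CDF

variable {μ : Measure ℝ}

lemma continuous_cdf [IsProbabilityMeasure μ] [NullSingletonClass μ] : Continuous (cdf μ) := by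
  refine continuous_iff_continuousAt.2 fun x => ?_
  rw [(monotone_cdf μ).continuousAt_iff_leftLim_eq_rightLim, StieltjesFunction.rightLim_eq]
  have h := (cdf μ).measure_singleton x
  rw [measure_cdf, measure_singleton, eq_comm, ENNReal.ofReal_eq_zero, sub_nonpos] at h
  exact le_antisymm ((monotone_cdf μ).leftLim_le le_rfl) h

lemma measure_cdf_le [IsProbabilityMeasure μ] [NullSingletonClass μ] {u : ℝ} (hu₀ : 0 ≤ u)
    (hu₁ : u ≤ 1) : μ {x | cdf μ x ≤ u} = ENNReal.ofReal u := by
  rcases hu₁.eq_or_lt with rfl | hu₁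
  · simp [cdf_le_one]
  set S := {x | cdf μ x ≤ u}
  rcases S.eq_empty_or_nonempty with hS | hS
  · obtain rfl : u = 0 := by
      refine (hu₀.eq_or_lt.resolve_right fun hu => ?_).symm
      obtain ⟨x, hx⟩ := ((tendsto_cdf_atBot μ).eventually (gt_mem_nhds hu)).exists
      exact hS.subset hx.le
    simp [S, hS]
  have hbdd : BddAbove S := by
    obtain ⟨b, hb⟩ := ((tendsto_cdf_atTop μ).eventually (lt_mem_nhds hu₁)).exists
    exact ⟨b, fun x hx => le_of_not_gt fun hbx => (hb.trans_le (monotone_cdf μ hbx.le)).not_ge hx⟩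
  -- `S` is a closed down-set that is bounded above, hence `S = Iic (sSup S)`.
  have hmem : sSup S ∈ S := (isClosed_le continuous_cdf continuous_const).csSup_mem hS hbdd
  have hSIic : S = Iic (sSup S) :=
    Subset.antisymm (fun x hx => le_csSup hbdd hx) fun x hx => (monotone_cdf μ hx).trans hmem
  have hcdf : cdf μ (sSup S) = u := by
    refine le_antisymm hmem (ge_of_tendsto
      (continuous_cdf.continuousAt.tendsto.mono_left (nhdsWithin_le_nhds (s := Ioi (sSup S)))) ?_)
    filter_upwards [self_mem_nhdsWithin] with x hx
    exact (not_le.1 fun h => hx.not_ge (le_csSup hbdd h)).le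
  rw [hSIic, ← ofReal_cdf, hcdf]

variable (μ) in
noncomputable def cdfToUnitInterval (x : ℝ) : I := ⟨cdf μ x, cdf_nonneg μ x, cdf_le_one μ x⟩

variable (μ) in
lemma measurable_cdfToUnitInterval : Measurable (cdfToUnitInterval μ) :=
  (monotone_cdf μ).measurable.subtype_mk

lemma map_cdfToUnitInterval [IsProbabilityMeasure μ] [NullSingletonClass μ] :
    μ.map (cdfToUnitInterval μ) = volume := by
  have := Measure.isProbabilityMeasure_map (μ := μ) (measurable_cdfToUnitInterval μ).aemeasurable
  refine Measure.ext_of_Iic _ _ fun u => ?_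
  rw [Measure.map_apply (measurable_cdfToUnitInterval μ) measurableSet_Iic,
    unitInterval.volume_Iic]
  exact measure_cdf_le u.2.1 u.2.2

end CDF

section ChangeOfMeasure

variable {Ω α β : Type*} [MeasurableSpace Ω] [MeasurableSpace α] [MeasurableSpace β]
  {μ : Measure Ω} [IsFiniteMeasure μ] {Z : Ω → α} {W : Ω → β} {g : β → ℝ≥0∞}

lemma IndepFun.map_prodMk_withDensity_comp (hZ : Measurable Z) (hW : Measurable W)
    (hZW : IndepFun Z W μ) (hg : Measurable g) :
    (μ.withDensity (g ∘ W)).map (fun ω => (Z ω, W ω)) =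
      (μ.map Z).prod ((μ.withDensity (g ∘ W)).map W) := by
  have hgW : g ∘ W = (g ∘ Prod.snd) ∘ fun ω => (Z ω, W ω) := rfl
  rw [Measure.map_withDensity_comp hW hg, hgW,
    Measure.map_withDensity_comp (hZ.prodMk hW) (hg.comp measurable_snd),
    (indepFun_iff_map_prod_eq_prod_map_map hZ.aemeasurable hW.aemeasurable).1 hZW,
    prod_withDensity_right hg]
  rfl

variable [IsProbabilityMeasure (μ.withDensity (g ∘ W))]

lemma IndepFun.map_withDensity_comp (hZ : Measurable Z) (hW : Measurable W)
    (hZW : IndepFun Z W μ) (hg : Measurable g) :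
    (μ.withDensity (g ∘ W)).map Z = μ.map Z := by
  have := Measure.isProbabilityMeasure_map (μ := μ.withDensity (g ∘ W)) hW.aemeasurable
  rw [← Measure.fst_map_prodMk (X := Z) hW, hZW.map_prodMk_withDensity_comp hZ hW hg,
    Measure.fst_prod]

lemma IndepFun.withDensity_comp (hZ : Measurable Z) (hW : Measurable W)
    (hZW : IndepFun Z W μ) (hg : Measurable g) : IndepFun Z W (μ.withDensity (g ∘ W)) := by
  rw [indepFun_iff_map_prod_eq_prod_map_map hZ.aemeasurable hW.aemeasurable,
    hZW.map_prodMk_withDensity_comp hZ hW hg, hZW.map_withDensity_comp hZ hW hg]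

end ChangeOfMeasure

lemma exists_map_prodMk_eq_compProd {Ω α β : Type*} [MeasurableSpace Ω] [MeasurableSpace α]
    [MeasurableSpace β] [StandardBorelSpace β] [Nonempty β] {μ : Measure Ω} [IsFiniteMeasure μ]
    {D : Ω → α} {V : Ω → I} (hD : Measurable D) (hV : Measurable V) (hVμ : μ.map V = volume)
    (hDV : IndepFun D V μ) (κ : Kernel α β) [IsMarkovKernel κ] :
    ∃ X : Ω → β, Measurable X ∧ μ.map (fun ω => (D ω, X ω)) = μ.map D ⊗ₘ κ := by
  obtain ⟨f, hf, hfκ⟩ := κ.exists_measurable_map_eq_unitInterval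
  have hmeas : Measurable fun p : α × I => (p.1, f p.1 p.2) := measurable_fst.prodMk hf
  refine ⟨fun ω => f (D ω) (V ω), hf.comp (hD.prodMk hV), ?_⟩
  rw [← Measure.map_prod_eq_compProd _ _ hf κ hfκ, ← hVμ,
    ← (indepFun_iff_map_prod_eq_prod_map_map hD.aemeasurable hV.aemeasurable).1 hDV,
    Measure.map_map hmeas (hD.prodMk hV)]
  rfl

lemma map_eq_snd_withDensity_map_rnDeriv {Ω β : Type*} [MeasurableSpace Ω] [MeasurableSpace β]
    {P Q : Measure Ω} [SigmaFinite P] [SigmaFinite Q] (hPQ : P ≪ Q) {Y : Ω → β}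
    (hY : Measurable Y) :
    P.map Y = ((Q.map fun ω => ((P.rnDeriv Q ω).toReal, Y ω)).withDensity
      fun p => ENNReal.ofReal p.1).snd := by
  set DY : Ω → ℝ × β := fun ω => ((P.rnDeriv Q ω).toReal, Y ω)
  have hDY : Measurable DY := by fun_prop
  set g : ℝ × β → ℝ≥0∞ := fun p => ENNReal.ofReal p.1
  have hP : Q.withDensity (g ∘ DY) = P := by
    rw [← Measure.withDensity_rnDeriv_eq P Q hPQ]
    refine withDensity_congr_ae ?_
    filter_upwards [P.rnDeriv_ne_top Q] with ω h
    simp [g, DY, ENNReal.ofReal_toReal h]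
  rw [← Measure.map_withDensity_comp hDY (by fun_prop), hP, Measure.snd,
    Measure.map_map measurable_snd hDY]
  rfl

end ProbabilityTheory

namespace CondAtomlessPair

variable {Ω : Type} [MeasurableSpace Ω] {P Q : Measure Ω} [SigmaFinite P] [IsProbabilityMeasure Q]

lemma exists_indepFun_rnDeriv (h : CondAtomlessPair P Q) :
    ∃ Z : Ω → ℝ, Measurable Z ∧ NullSingletonClass (Q.map Z) ∧
      IndepFun (fun ω => (P.rnDeriv Q ω).toReal) Z Q := by
  obtain ⟨R, hR, hPR, hQR, Z, hZ, hZatom, hZW⟩ := h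
  set W : Ω → ℝ × ℝ := fun ω => ((P.rnDeriv R ω).toReal, (Q.rnDeriv R ω).toReal)
  have hW : Measurable W := by fun_prop
  -- `Q` has an `R`-density that is a function of `W`, and `dP/dQ = (dP/dR) / (dQ/dR)`.
  set g : ℝ × ℝ → ℝ≥0∞ := fun p => ENNReal.ofReal p.2
  have hg : Measurable g := by fun_prop
  have hQ : R.withDensity (g ∘ W) = Q := by
    rw [← Measure.withDensity_rnDeriv_eq Q R hQR]
    refine withDensity_congr_ae ?_
    filter_upwards [Q.rnDeriv_ne_top R] with ω h
    simp [g, W, ENNReal.ofReal_toReal h]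
  have : IsProbabilityMeasure (R.withDensity (g ∘ W)) := hQ ▸ inferInstance
  refine ⟨Z, hZ, ⟨fun x => ?_⟩, ?_⟩
  · rw [← hQ, hZW.map_withDensity_comp hZ hW hg]
    exact hZatom x
  · have hD : (fun p : ℝ × ℝ => p.1 / p.2) ∘ W =ᵐ[Q] fun ω => (P.rnDeriv Q ω).toReal := by
      filter_upwards [Measure.rnDeriv_eq_div hPR hQR] with ω h
      simp [W, h]
    have hZWQ := hZW.withDensity_comp hZ hW hg
    rw [hQ] at hZWQ
    exact (hZWQ.comp measurable_id (by fun_prop)).congr (.refl _ _) hD |>.symm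

lemma exists_uniform_indepFun_rnDeriv (h : CondAtomlessPair P Q) :
    ∃ V : Ω → I, Measurable V ∧ Q.map V = volume ∧
      IndepFun (fun ω => (P.rnDeriv Q ω).toReal) V Q := by
  obtain ⟨Z, hZ, hZatom, hDZ⟩ := h.exists_indepFun_rnDeriv
  have := Measure.isProbabilityMeasure_map (μ := Q) hZ.aemeasurable
  refine ⟨cdfToUnitInterval (Q.map Z) ∘ Z, (measurable_cdfToUnitInterval _).comp hZ, ?_,
    hDZ.comp measurable_id (measurable_cdfToUnitInterval _)⟩
  rw [← Measure.map_map (measurable_cdfToUnitInterval _) hZ, map_cdfToUnitInterval]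

end CondAtomlessPair

theorem compatible_distribution_set_convex_general
    {Ω : Type} [MeasurableSpace Ω]
    (P Q : Measure Ω) [IsProbabilityMeasure P] [IsProbabilityMeasure Q]
    (hPQ : P ≪ Q) (hca : CondAtomlessPair P Q)
    (G : Measure ℝ) :
    ∀ F₁ F₂ : Measure ℝ,
      (∃ X : Ω → ℝ, Measurable X ∧ P.map X = F₁ ∧ Q.map X = G) →
      (∃ X : Ω → ℝ, Measurable X ∧ P.map X = F₂ ∧ Q.map X = G) →
      ∀ t : ℝ≥0∞, t ≤ 1 →
        ∃ X : Ω → ℝ, Measurable X ∧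
          P.map X = t • F₁ + (1 - t) • F₂ ∧ Q.map X = G := by
  rintro F₁ F₂ ⟨X₁, hX₁, rfl, hX₁G⟩ ⟨X₂, hX₂, rfl, hX₂G⟩ t ht
  set D : Ω → ℝ := fun ω => (P.rnDeriv Q ω).toReal
  have hD : Measurable D := by fun_prop
  obtain ⟨V, hV, hVQ, hDV⟩ := hca.exists_uniform_indepFun_rnDeriv
  set ρ : Measure (ℝ × ℝ) :=
    t • Q.map (fun ω => (D ω, X₁ ω)) + (1 - t) • Q.map (fun ω => (D ω, X₂ ω))
  have hρD : ρ.fst = Q.map D := by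
    rw [Measure.fst_add, Measure.fst_smul, Measure.fst_smul, Measure.fst_map_prodMk hX₁,
      Measure.fst_map_prodMk hX₂, Measure.smul_add_one_sub_smul _ ht]
  have := Measure.isProbabilityMeasure_map (μ := Q) hD.aemeasurable
  have : IsProbabilityMeasure ρ := ⟨by rw [← Measure.fst_univ, hρD, measure_univ]⟩
  obtain ⟨X, hX, hDX⟩ := exists_map_prodMk_eq_compProd hD hV hVQ hDV ρ.condKernel
  rw [← hρD, ρ.disintegrate] at hDX
  refine ⟨X, hX, ?_, ?_⟩
  · rw [map_eq_snd_withDensity_map_rnDeriv hPQ hX, hDX, withDensity_add_measure,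
      withDensity_smul_measure, withDensity_smul_measure, Measure.snd_add, Measure.snd_smul,
      Measure.snd_smul, ← map_eq_snd_withDensity_map_rnDeriv hPQ hX₁,
      ← map_eq_snd_withDensity_map_rnDeriv hPQ hX₂]
  · rw [← Measure.snd_map_prodMk hD, hDX, Measure.snd_add, Measure.snd_smul, Measure.snd_smul,
      Measure.snd_map_prodMk hD, Measure.snd_map_prodMk hD, hX₁G, hX₂G,
      Measure.smul_add_one_sub_smul _ ht]

/-- Corollary 5.3. For equivalent probability measures `P, Q` on `(Ω, 𝒜)`
with `(P,Q)` conditionally atomless, and a Borel probability measure `G` on `ℝ`, the set of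
Borel probability measures `F` such that some measurable `X : Ω → ℝ` has distribution `F`
under `P` and `G` under `Q` is convex. -/
theorem compatible_distribution_set_convex
    {Ω : Type} [MeasurableSpace Ω]
    (P Q : Measure Ω) [IsProbabilityMeasure P] [IsProbabilityMeasure Q]
    (hPQ : P ≪ Q) (hQP : Q ≪ P) (hca : CondAtomlessPair P Q)
    (G : Measure ℝ) [IsProbabilityMeasure G] :
    ∀ F₁ F₂ : Measure ℝ,
      (∃ X : Ω → ℝ, Measurable X ∧ P.map X = F₁ ∧ Q.map X = G) →
      (∃ X : Ω → ℝ, Measurable X ∧ P.map X = F₂ ∧ Q.map X = G) →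
      ∀ t : ℝ≥0∞, t ≤ 1 →
        ∃ X : Ω → ℝ, Measurable X ∧
          P.map X = t • F₁ + (1 - t) • F₂ ∧ Q.map X = G :=
  compatible_distribution_set_convex_general P Q hPQ hca G
end

section
/- Let $P$ and $Q$ be equivalent atomless probability measures on $(\Omega,\mathcal A)$, let $G$ be a Borel probability measure on $\mathbb{R}$ with quantile function $G^{-1}$, and let $U$ be a $[0,1]$-uniform (under $Q$) random variable such that $H^{-1}(U)=\frac{dP}{dQ}$ $Q$-a.s., where $H$ is the distribution function of $\frac{dP}{dQ}$ under $Q$. Set $X^*=G^{-1}(U)$ and $X_*=G^{-1}(1-U)$. Then $X^*$ and $X_*$ both have distribution $G$ under $Q$, and for every measurable $Y$ with $Q\circ Y^{-1}=G$ and every $x\in\mathbb{R}$: $P(X_*>x)\le P(Y>x)\le P(X^*>x)$. -/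
/-!
Under `Q`, both `X^* = G⁻¹(U)` and any `Y` with law `G` satisfy `Q(X^* > x) = Q(Y > x)`, and
`{X^* > x}` coincides `Q`-a.s. with `{U > G(x)}`. Since `dP/dQ = H⁻¹(U)` is a nondecreasing
function of `U`, the density is at most some threshold `M` off `{U > G(x)}` and at least `M`
on it; among sets of a given `Q`-measure, an upper level set of `U` therefore carries the
largest `P`-mass `∫ dP/dQ dQ`. Lower level sets such as `{X_* > x} = {U < 1 - G(x)}` carry the
smallest, by passing to complements.
-/

open MeasureTheory ProbabilityTheory Set Filter
open scoped ENNReal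

/-- Generalized inverse (quantile function) of a Borel probability measure on `ℝ`. -/
noncomputable def quantileFn (μ : Measure ℝ) (t : ℝ) : ℝ :=
  sInf {x : ℝ | ENNReal.ofReal t ≤ μ (Set.Iic x)}

/-- A measure is atomless: every set of positive measure contains a subset of strictly smaller
positive measure. -/
def AtomlessMeasure {Ω : Type} [MeasurableSpace Ω] (μ : Measure Ω) : Prop :=
  ∀ A : Set Ω, MeasurableSet A → 0 < μ A →
    ∃ B ⊆ A, MeasurableSet B ∧ 0 < μ B ∧ μ B < μ A

section Quantile

variable (μ : Measure ℝ)

theorem bddBelow_setOf_le_cdf {t : ℝ} (ht : 0 < t) : BddBelow {x | t ≤ cdf μ x} := by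
  obtain ⟨b, hb⟩ :=
    ((tendsto_cdf_atBot μ).eventually (eventually_lt_nhds ht)).exists_forall_of_atBot
  exact ⟨b, fun x hx => le_of_not_gt fun hxb => (hb x hxb.le).not_ge hx⟩

theorem nonempty_setOf_le_cdf {t : ℝ} (ht : t < 1) : {x | t ≤ cdf μ x}.Nonempty :=
  ((tendsto_cdf_atTop μ).eventually (eventually_gt_nhds ht)).exists.imp fun _ => le_of_lt

variable [IsProbabilityMeasure μ]

theorem quantileFn_eq_sInf_cdf (t : ℝ) : quantileFn μ t = sInf {x | t ≤ cdf μ x} := by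
  simp only [quantileFn, ← ofReal_cdf, ENNReal.ofReal_le_ofReal_iff (cdf_nonneg μ _)]

theorem quantileFn_le_iff {t : ℝ} (ht : t ∈ Ioo 0 1) (x : ℝ) :
    quantileFn μ t ≤ x ↔ t ≤ cdf μ x := by
  rw [quantileFn_eq_sInf_cdf]
  refine ⟨fun h => (monotone_cdf μ h).trans' ?_,
    fun h => csInf_le (bddBelow_setOf_le_cdf μ ht.1) h⟩
  -- the infimum is attained, by right continuity of the cdf
  refine ge_of_tendsto (((cdf μ).right_continuous _).mono Ioi_subset_Ici_self)
    (eventually_nhdsWithin_of_forall fun y hy => ?_)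
  obtain ⟨z, hz, hzy⟩ := exists_lt_of_csInf_lt (nonempty_setOf_le_cdf μ ht.2) hy
  exact hz.trans (monotone_cdf μ hzy.le)

theorem monotoneOn_quantileFn : MonotoneOn (quantileFn μ) (Ioo 0 1) := fun _ hs _ ht hst =>
  (quantileFn_le_iff μ hs _).2 (hst.trans ((quantileFn_le_iff μ ht _).1 le_rfl))

theorem aemeasurable_quantileFn : AEMeasurable (quantileFn μ) (volume.restrict (Icc 0 1)) := by
  rw [← Measure.restrict_congr_set Ioo_ae_eq_Icc]
  exact aemeasurable_restrict_of_monotoneOn measurableSet_Ioo (monotoneOn_quantileFn μ)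

theorem map_quantileFn_uniform : (volume.restrict (Icc 0 1)).map (quantileFn μ) = μ := by
  refine Measure.ext_of_Iic _ _ fun y => ?_
  have hy : quantileFn μ ⁻¹' Iic y =ᵐ[volume.restrict (Icc 0 1)] Iic (cdf μ y) := by
    rw [← Measure.restrict_congr_set Ioo_ae_eq_Icc, eventuallyEq_set]
    filter_upwards [ae_restrict_mem measurableSet_Ioo] with t ht
    exact quantileFn_le_iff μ ht y
  have hIcc : Iic (cdf μ y) ∩ Icc 0 1 = Icc 0 (cdf μ y) :=
    Set.ext fun t => ⟨fun h => ⟨h.2.1, h.1⟩, fun h => ⟨h.2, h.1, h.2.trans (cdf_le_one μ y)⟩⟩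
  rw [Measure.map_apply_of_aemeasurable (aemeasurable_quantileFn μ) measurableSet_Iic,
    measure_congr hy, Measure.restrict_apply measurableSet_Iic, hIcc, Real.volume_Icc, sub_zero,
    ofReal_cdf]

end Quantile

section Uniform

variable {Ω : Type*} [MeasurableSpace Ω] {Q : Measure Ω} {V : Ω → ℝ}

theorem ae_mem_Ioo_of_map_eq_uniform (hV : Measurable V)
    (hlaw : Q.map V = volume.restrict (Icc 0 1)) : ∀ᵐ ω ∂Q, V ω ∈ Ioo 0 1 := by
  refine ae_of_ae_map hV.aemeasurable ?_
  rw [hlaw, ← Measure.restrict_congr_set Ioo_ae_eq_Icc]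
  exact ae_restrict_mem measurableSet_Ioo

theorem measure_setOf_lt_of_map_eq {μ : Measure ℝ} [NeZero μ] (hlaw : Q.map V = μ) (x : ℝ) :
    Q {ω | x < V ω} = μ (Ioi x) := by
  rw [← hlaw, Measure.map_apply_of_aemeasurable (.of_map_ne_zero (hlaw ▸ NeZero.ne μ))
    measurableSet_Ioi]
  rfl

theorem map_one_sub_uniform :
    (volume.restrict (Icc (0 : ℝ) 1)).map (fun t => 1 - t) = volume.restrict (Icc 0 1) := by
  conv_rhs => rw [← (Measure.measurePreserving_sub_left volume (1 : ℝ)).map_eq]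
  rw [Measure.restrict_map (by fun_prop) measurableSet_Icc, preimage_const_sub_Icc]
  norm_num

theorem map_one_sub_of_map_eq_uniform (hV : Measurable V)
    (hlaw : Q.map V = volume.restrict (Icc 0 1)) :
    Q.map (fun ω => 1 - V ω) = volume.restrict (Icc 0 1) := by
  rw [← map_one_sub_uniform, ← hlaw, Measure.map_map (by fun_prop) hV]
  rfl

theorem map_quantileFn_comp (μ : Measure ℝ) [IsProbabilityMeasure μ] (hV : Measurable V)
    (hlaw : Q.map V = volume.restrict (Icc 0 1)) :
    Q.map (fun ω => quantileFn μ (V ω)) = μ := by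
  have hq : AEMeasurable (quantileFn μ) (Q.map V) := hlaw ▸ aemeasurable_quantileFn μ
  calc Q.map (fun ω => quantileFn μ (V ω)) = (Q.map V).map (quantileFn μ) :=
        (hq.map_map_of_aemeasurable hV.aemeasurable).symm
    _ = μ := by rw [hlaw, map_quantileFn_uniform]

theorem setOf_lt_quantileFn_ae_eq (μ : Measure ℝ) [IsProbabilityMeasure μ]
    (hV : ∀ᵐ ω ∂Q, V ω ∈ Ioo 0 1) (x : ℝ) :
    {ω | x < quantileFn μ (V ω)} =ᵐ[Q] V ⁻¹' Ioi (cdf μ x) := by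
  rw [eventuallyEq_set]
  filter_upwards [hV] with ω hω
  simpa only [not_le, mem_preimage, mem_Ioi] using (quantileFn_le_iff μ hω x).not

end Uniform

section Exchange

variable {Ω : Type*} [MeasurableSpace Ω] {P Q : Measure Ω}

theorem setLIntegral_le_setLIntegral_of_measure_eq [IsFiniteMeasure Q] {Z : Ω → ℝ≥0∞}
    {S T : Set Ω} (hS : MeasurableSet S) (hT : MeasurableSet T) (hST : Q S = Q T) {M : ℝ≥0∞}
    (hSM : ∀ᵐ ω ∂Q, ω ∈ S \ T → Z ω ≤ M) (hTM : ∀ᵐ ω ∂Q, ω ∈ T \ S → M ≤ Z ω) :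
    ∫⁻ ω in S, Z ω ∂Q ≤ ∫⁻ ω in T, Z ω ∂Q := by
  have hd : Q (S \ T) = Q (T \ S) :=
    measure_sdiff_symm hS.nullMeasurableSet hT.nullMeasurableSet hST (measure_ne_top _ _)
  calc ∫⁻ ω in S, Z ω ∂Q = ∫⁻ ω in S ∩ T, Z ω ∂Q + ∫⁻ ω in S \ T, Z ω ∂Q :=
        (lintegral_inter_add_sdiff _ _ hT).symm
    _ ≤ ∫⁻ ω in T ∩ S, Z ω ∂Q + M * Q (T \ S) := by
        rw [inter_comm, ← hd, ← setLIntegral_const]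
        gcongr 1
        exact lintegral_mono_ae ((ae_restrict_iff' (hS.diff hT)).2 hSM)
    _ ≤ ∫⁻ ω in T ∩ S, Z ω ∂Q + ∫⁻ ω in T \ S, Z ω ∂Q := by
        rw [← setLIntegral_const]
        gcongr 1
        exact lintegral_mono_ae ((ae_restrict_iff' (hT.diff hS)).2 hTM)
    _ = ∫⁻ ω in T, Z ω ∂Q := lintegral_inter_add_sdiff _ _ hS

variable [IsFiniteMeasure P] [IsFiniteMeasure Q] {U : Ω → ℝ} {s t : Set ℝ} {ψ : ℝ → ℝ≥0∞}
  {A : Set Ω}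

theorem measure_le_measure_preimage_of_isUpperSet (hPQ : P ≪ Q) (hU : Measurable U)
    (hψ : MonotoneOn ψ s) (hUs : ∀ᵐ ω ∂Q, U ω ∈ s) (hZ : P.rnDeriv Q =ᵐ[Q] ψ ∘ U)
    (ht : IsUpperSet t) (hA : MeasurableSet A) (hQA : Q A = Q (U ⁻¹' t)) :
    P A ≤ P (U ⁻¹' t) := by
  rw [← Measure.setLIntegral_rnDeriv hPQ, ← Measure.setLIntegral_rnDeriv hPQ]
  refine setLIntegral_le_setLIntegral_of_measure_eq hA (hU ht.ordConnected.measurableSet) hQA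
    (M := ⨆ u ∈ s \ t, ψ u) ?_ ?_
  · filter_upwards [hZ, hUs] with ω hZω hUω hω
    rw [hZω]
    exact le_iSup₂ (f := fun u _ => ψ u) (U ω) ⟨hUω, hω.2⟩
  · filter_upwards [hZ, hUs] with ω hZω hUω hω
    rw [hZω]
    exact iSup₂_le fun u hu => hψ hu.1 hUω (le_of_not_ge fun h => hu.2 (ht h hω.1))

theorem measure_preimage_le_measure_of_isLowerSet (hPQ : P ≪ Q) (hU : Measurable U)
    (hψ : MonotoneOn ψ s) (hUs : ∀ᵐ ω ∂Q, U ω ∈ s) (hZ : P.rnDeriv Q =ᵐ[Q] ψ ∘ U)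
    (ht : IsLowerSet t) (hA : MeasurableSet A) (hQA : Q A = Q (U ⁻¹' t)) :
    P (U ⁻¹' t) ≤ P A := by
  have hT : MeasurableSet (U ⁻¹' t) := hU ht.ordConnected.measurableSet
  have hcompl : P Aᶜ ≤ P (U ⁻¹' t)ᶜ :=
    measure_le_measure_preimage_of_isUpperSet hPQ hU hψ hUs hZ ht.compl hA.compl
      (by rw [measure_compl hA (measure_ne_top _ _), hQA,
        ← measure_compl hT (measure_ne_top _ _), preimage_compl])
  refine ENNReal.le_of_add_le_add_right (measure_ne_top P Aᶜ) ?_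
  calc P (U ⁻¹' t) + P Aᶜ ≤ P (U ⁻¹' t) + P (U ⁻¹' t)ᶜ := by gcongr
    _ = P A + P Aᶜ := by rw [measure_add_measure_compl hT, measure_add_measure_compl hA]

end Exchange

theorem stochastic_order_bounds_general
    {Ω : Type} [MeasurableSpace Ω]
    (P Q : Measure Ω) [IsProbabilityMeasure P] [IsProbabilityMeasure Q]
    (hPQ : P ≪ Q)
    (G : Measure ℝ) [IsProbabilityMeasure G]
    (U : Ω → ℝ) (hU : Measurable U)
    (hUlaw : Q.map U = volume.restrict (Set.Icc (0:ℝ) 1))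
    (hUq : ∀ᵐ ω ∂Q,
      quantileFn (Q.map (fun ω' => (P.rnDeriv Q ω').toReal)) (U ω)
        = (P.rnDeriv Q ω).toReal) :
    Q.map (fun ω => quantileFn G (U ω)) = G ∧
    Q.map (fun ω => quantileFn G (1 - U ω)) = G ∧
    ∀ Y : Ω → ℝ, Measurable Y → Q.map Y = G → ∀ x : ℝ,
      P {ω | x < quantileFn G (1 - U ω)} ≤ P {ω | x < Y ω} ∧
      P {ω | x < Y ω} ≤ P {ω | x < quantileFn G (U ω)} := by
  set H := Q.map (fun ω' => (P.rnDeriv Q ω').toReal)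
  have : IsProbabilityMeasure H :=
    Measure.isProbabilityMeasure_map (Measure.measurable_rnDeriv P Q).ennreal_toReal.aemeasurable
  have hV := map_one_sub_of_map_eq_uniform hU hUlaw
  have hU01 := ae_mem_Ioo_of_map_eq_uniform hU hUlaw
  have hV01 := ae_mem_Ioo_of_map_eq_uniform (by fun_prop) hV
  have hZ : P.rnDeriv Q =ᵐ[Q] (ENNReal.ofReal ∘ quantileFn H) ∘ U := by
    filter_upwards [hUq, Measure.rnDeriv_lt_top P Q] with ω hq hlt
    rw [Function.comp_apply, Function.comp_apply, hq, ENNReal.ofReal_toReal hlt.ne]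
  have hψ := ENNReal.ofReal_mono.comp_monotoneOn (monotoneOn_quantileFn H)
  have hXup := map_quantileFn_comp G hU hUlaw
  have hXlow := map_quantileFn_comp G (by fun_prop) hV
  refine ⟨hXup, hXlow, fun Y hY hYlaw x => ?_⟩
  have hup := setOf_lt_quantileFn_ae_eq G hU01 x
  have hlow : {ω | x < quantileFn G (1 - U ω)} =ᵐ[Q] U ⁻¹' Iio (1 - cdf G x) := by
    rw [← preimage_const_sub_Ioi]
    exact setOf_lt_quantileFn_ae_eq G hV01 x
  have hA : MeasurableSet {ω | x < Y ω} := measurableSet_lt measurable_const hY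
  constructor
  · rw [measure_congr (hPQ.ae_eq hlow)]
    exact measure_preimage_le_measure_of_isLowerSet hPQ hU hψ hU01 hZ (isLowerSet_Iio _) hA
      (by rw [← measure_congr hlow, measure_setOf_lt_of_map_eq hXlow,
        measure_setOf_lt_of_map_eq hYlaw])
  · rw [measure_congr (hPQ.ae_eq hup)]
    exact measure_le_measure_preimage_of_isUpperSet hPQ hU hψ hU01 hZ (isUpperSet_Ioi _) hA
      (by rw [← measure_congr hup, measure_setOf_lt_of_map_eq hXup,
        measure_setOf_lt_of_map_eq hYlaw])

/-- Proposition 5.4. Let `P, Q` be equivalent atomless probability measures,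
`G` a Borel probability measure on `ℝ`, and `U` a `[0,1]`-uniform random variable under `Q`
with `H⁻¹(U) = dP/dQ` `Q`-a.s., where `H` is the distribution of `dP/dQ` under `Q`. Then
`X* = G⁻¹(U)` and `X₊ = G⁻¹(1-U)` both have distribution `G` under `Q`, and for every `Y`
with distribution `G` under `Q` and all `x`, `P(X₊ > x) ≤ P(Y > x) ≤ P(X* > x)`. -/
theorem stochastic_order_bounds
    {Ω : Type} [MeasurableSpace Ω]
    (P Q : Measure Ω) [IsProbabilityMeasure P] [IsProbabilityMeasure Q]
    (hPQ : P ≪ Q) (hQP : Q ≪ P)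
    (hPat : AtomlessMeasure P) (hQat : AtomlessMeasure Q)
    (G : Measure ℝ) [IsProbabilityMeasure G]
    (U : Ω → ℝ) (hU : Measurable U)
    (hUlaw : Q.map U = volume.restrict (Set.Icc (0:ℝ) 1))
    (hUq : ∀ᵐ ω ∂Q,
      quantileFn (Q.map (fun ω' => (P.rnDeriv Q ω').toReal)) (U ω)
        = (P.rnDeriv Q ω).toReal) :
    Q.map (fun ω => quantileFn G (U ω)) = G ∧
    Q.map (fun ω => quantileFn G (1 - U ω)) = G ∧
    ∀ Y : Ω → ℝ, Measurable Y → Q.map Y = G → ∀ x : ℝ,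
      P {ω | x < quantileFn G (1 - U ω)} ≤ P {ω | x < Y ω} ∧
      P {ω | x < Y ω} ≤ P {ω | x < quantileFn G (U ω)} :=
  stochastic_order_bounds_general P Q hPQ G U hU hUlaw hUq
end
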